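/- Let (G_1,u_1) and (G_2,u_2) be rooted connected locally finite graphs. If for some positive integers d_1 < d_2 < d_3 one has q_{d_1,d_2,d_3}(G_1,u_1) ≠ q_{d_1,d_2,d_3}(G_2,u_2), then (G_1,u_1) and (G_2,u_2) are distinguishable by the sequence S^{(d_1,d_2,d_3)}. -/

import Mathlib

open Filter Topology MeasureTheory.Measure
open scoped ENNReal Classical

noncomputable section

namespace NVMPaper

/-- A model of the discrete-time noisy voter model with noise `ε` on the graph `G`.
`Z t v = (ξ, Y, η)` is the driving randomness used by vertex `v` at time `t`:
`ξ` is the fresh-opinion indicator (probability `ε`), `Y` a fresh `Bernoulli(1/2)`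
opinion and `η` a uniformly chosen neighbor of `v`; all of these variables
(over all `t` and `v`) are independent.  The initial opinion of `v` is `Y 0 v`. -/
structure NVM {V : Type} (G : SimpleGraph V) (ε : ℝ) where
  space : Type
  [msp : MeasurableSpace space]
  P : MeasureTheory.Measure space
  isProb : MeasureTheory.IsProbabilityMeasure P
  Z : ℕ → V → space → Bool × Bool × V
  meas : ∀ t v b₁ b₂ w, MeasurableSet {ω | Z t v ω = (b₁, b₂, w)}
  indep : ∀ (F : Finset (ℕ × V)) (a : ℕ × V → Bool × Bool × V),
    P {ω | ∀ p ∈ F, Z p.1 p.2 ω = a p} = ∏ p ∈ F, P {ω | Z p.1 p.2 ω = a p}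
  dist : ∀ (t : ℕ) (v : V) (b₁ b₂ : Bool) (w : V),
    P {ω | Z t v ω = (b₁, b₂, w)} =
      (if b₁ then ENNReal.ofReal ε else ENNReal.ofReal (1 - ε)) * (1 / 2) *
        (if w ∈ G.neighborSet v then ((Nat.card (G.neighborSet v) : ℝ≥0∞))⁻¹ else 0)

attribute [instance] NVM.msp

namespace NVM

variable {V : Type} {G : SimpleGraph V} {ε : ℝ}

/-- `ξ_t(v)`, the fresh-opinion indicator. -/
def xi (M : NVM G ε) (t : ℕ) (v : V) (ω : M.space) : Bool := (M.Z t v ω).1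

/-- `Y_t(v)`, the fresh opinion. -/
def fresh (M : NVM G ε) (t : ℕ) (v : V) (ω : M.space) : Bool := (M.Z t v ω).2.1

/-- `η_t(v)`, the uniformly chosen neighbor. -/
def eta (M : NVM G ε) (t : ℕ) (v : V) (ω : M.space) : V := (M.Z t v ω).2.2

/-- The opinion process `X_t(v)` of the noisy voter model. -/
def X (M : NVM G ε) : ℕ → V → M.space → Bool
  | 0, v, ω => M.fresh 0 v ω
  | t + 1, v, ω =>
      if M.xi (t + 1) v ω then M.fresh (t + 1) v ω else X M t (M.eta (t + 1) v ω) ω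

/-- The real-valued observation of the process at the root `u`. -/
def obs (M : NVM G ε) (u : V) (t : ℕ) (ω : M.space) : ℝ := if M.X t u ω then 1 else 0

/-- Position (at time `t - k`) of the backward path `π_t` of the digraph `𝒟_G`
started at `(u, t)`, after `k` backward steps; `none` if the path terminated. -/
def pathPos (M : NVM G ε) (u : V) (t : ℕ) : ℕ → M.space → Option V
  | 0, _ => some u
  | k + 1, ω =>
      if k + 1 ≤ t then
        match pathPos M u t k ω with
        | none => none
        | some v => if M.xi (t - k) v ω then none else some (M.eta (t - k) v ω)
      else none

/-- The event that the paths `π_t` and `π_{t+d}` share a vertex. -/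
def meetEvent (M : NVM G ε) (u : V) (t d : ℕ) : Set M.space :=
  {ω | ∃ k ≤ t, ∃ v : V,
      pathPos M u t k ω = some v ∧ pathPos M u (t + d) (k + d) ω = some v}

/-- `p_{t;d}(G,u)`, the probability that `π_t` meets `π_{t+d}`. -/
def ptd (M : NVM G ε) (u : V) (t d : ℕ) : ℝ := (M.P (M.meetEvent u t d)).toReal

/-- `p_d(G,u)`, the limit of the nondecreasing bounded sequence `t ↦ p_{t;d}(G,u)`. -/
def pd (M : NVM G ε) (u : V) (d : ℕ) : ℝ := ⨆ t, M.ptd u t d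

/-- `ζ_t = 1{X_t(u) = X_{t+d}(u)}`. -/
def zeta (M : NVM G ε) (u : V) (d t : ℕ) (ω : M.space) : ℝ :=
  if M.X t u ω = M.X (t + d) u ω then 1 else 0

end NVM

open Fin.NatCast in
/-- The statistic `S_t^{(d)}`, as a function of the observations `X_0, …, X_t`. -/
def Sstat (d t : ℕ) (x : Fin (t + 1) → ℝ) : ℝ :=
  (1 / ((t - d : ℕ) : ℝ)) *
    ∑ i ∈ Finset.Icc 1 (t - d), (if x i = x (i + d) then (1 : ℝ) else 0)

open Fin.NatCast in
/-- The statistic `S_t^{(d₁,d₂,d₃)}`, counting 4-tuples of equal opinions. -/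
def Sstat3 (d₁ d₂ d₃ t : ℕ) (x : Fin (t + 1) → ℝ) : ℝ :=
  (1 / ((t - d₃ : ℕ) : ℝ)) *
    ∑ i ∈ Finset.Icc 1 (t - d₃),
      (if x i = x (i + d₁) ∧ x i = x (i + d₂) ∧ x i = x (i + d₃) then (1 : ℝ) else 0)

/-- The random variable `S_t^{(d)}` evaluated on the observations of the model. -/
def Sobs {V : Type} {G : SimpleGraph V} {ε : ℝ} (M : NVM G ε) (u : V) (d t : ℕ)
    (ω : M.space) : ℝ :=
  Sstat d t fun i => M.obs u i ω

/-- `(G₁,u₁)` and `(G₂,u₂)` are distinguishable by the sequence of statistics `S`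
(where `S t` may use the observations `X_0, …, X_t`). -/
def DistinguishableBy {V₁ V₂ : Type} {G₁ : SimpleGraph V₁} {G₂ : SimpleGraph V₂} {ε : ℝ}
    (M₁ : NVM G₁ ε) (u₁ : V₁) (M₂ : NVM G₂ ε) (u₂ : V₂)
    (S : (t : ℕ) → (Fin (t + 1) → ℝ) → ℝ) : Prop :=
  ∃ A B : ℕ → Set ℝ, (∀ t, Disjoint (A t) (B t)) ∧
    Tendsto
      (fun t => (M₁.P.prod M₂.P)
        {ω : M₁.space × M₂.space |
          S t (fun i => M₁.obs u₁ i ω.1) ∈ A t ∧ S t (fun i => M₂.obs u₂ i ω.2) ∈ B t})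
      atTop (𝓝 1)

/-- `(G₁,u₁)` and `(G₂,u₂)` are NVM-distinguishable. -/
def NVMDistinguishable {V₁ V₂ : Type} {G₁ : SimpleGraph V₁} {G₂ : SimpleGraph V₂} {ε : ℝ}
    (M₁ : NVM G₁ ε) (u₁ : V₁) (M₂ : NVM G₂ ε) (u₂ : V₂) : Prop :=
  ∃ S : (t : ℕ) → (Fin (t + 1) → ℝ) → ℝ, DistinguishableBy M₁ u₁ M₂ u₂ S

/-- Covariance of two real random variables. -/
def covR {space : Type} [MeasurableSpace space] (P : MeasureTheory.Measure space) (f g : space → ℝ) : ℝ :=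
  ∫ ω, (f ω - ∫ x, f x ∂P) * (g ω - ∫ x, g x ∂P) ∂P


/-- The probability that `X_t = X_{t+d₁} = X_{t+d₂} = X_{t+d₃}` at the root `u`. -/
def qprob {V : Type} {G : SimpleGraph V} {ε : ℝ} (M : NVM G ε) (u : V)
    (d₁ d₂ d₃ t : ℕ) : ℝ :=
  (M.P {ω | M.X t u ω = M.X (t + d₁) u ω ∧ M.X t u ω = M.X (t + d₂) u ω ∧
      M.X t u ω = M.X (t + d₃) u ω}).toReal

/-- `q_{d₁,d₂,d₃}(G,u)`, the limit of the above probabilities as `t → ∞`. -/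
def qlim {V : Type} {G : SimpleGraph V} {ε : ℝ} (M : NVM G ε) (u : V)
    (d₁ d₂ d₃ : ℕ) : ℝ :=
  Filter.limsup (fun t => qprob M u d₁ d₂ d₃ t) atTop

/-! ### Auxiliary development for Theorem 2.11 -/

section AuxReal

lemma geom_sum_le_inv {β : ℝ} (h0 : 0 ≤ β) (h1 : β < 1) (n : ℕ) :
    ∑ k ∈ Finset.range n, β ^ k ≤ (1 - β)⁻¹ := by
  have h1' : β ≠ 1 := ne_of_lt h1
  rw [geom_sum_eq h1', ← neg_sub 1 (β ^ n), ← neg_sub 1 β, neg_div_neg_eq, ← one_div]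
  have hpos : 0 < 1 - β := by linarith
  have h2 : 1 - β ^ n ≤ 1 := by
    have : 0 ≤ β ^ n := pow_nonneg h0 n
    linarith
  gcongr

end AuxReal

namespace NVM

variable {V : Type} {G : SimpleGraph V} {ε : ℝ}

/-- The configuration of driving noise seen by `ω`. -/
def Zc (M : NVM G ε) (ω : M.space) : ℕ × V → Bool × Bool × V := fun p => M.Z p.1 p.2 ω

/-- Atom event for a single coordinate. -/
def atomSet (M : NVM G ε) (t : ℕ) (v : V) (c : Bool × Bool × V) : Set M.space :=
  {ω | M.Z t v ω = c}

lemma meas_atomSet (M : NVM G ε) (t : ℕ) (v : V) (c : Bool × Bool × V) :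
    MeasurableSet (M.atomSet t v c) := by
  obtain ⟨b₁, b₂, w⟩ := c
  exact M.meas t v b₁ b₂ w

lemma P_atomSet (M : NVM G ε) (t : ℕ) (v : V) (c : Bool × Bool × V) :
    M.P (M.atomSet t v c) =
      (if c.1 then ENNReal.ofReal ε else ENNReal.ofReal (1 - ε)) * (1 / 2) *
        (if c.2.2 ∈ G.neighborSet v then ((Nat.card (G.neighborSet v) : ℝ≥0∞))⁻¹ else 0) := by
  obtain ⟨b₁, b₂, w⟩ := c
  exact M.dist t v b₁ b₂ w

lemma P_atomSet_shift (M : NVM G ε) (t t' : ℕ) (v : V) (c : Bool × Bool × V) :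
    M.P (M.atomSet t v c) = M.P (M.atomSet t' v c) := by
  rw [P_atomSet, P_atomSet]

/-- Clamped choice of a neighbor. -/
def clampN (G : SimpleGraph V) (v w : V) : V :=
  if w ∈ G.neighborSet v then w
  else if h : (G.neighborSet v).Nonempty then h.some else v

lemma clampN_mem {v : V} (h : (G.neighborSet v).Nonempty) (w : V) :
    clampN G v w ∈ G.neighborSet v := by
  unfold clampN
  split_ifs with h1
  · exact h1
  · exact h.some_mem

lemma clampN_eq {v w : V} (h : w ∈ G.neighborSet v) : clampN G v w = w := if_pos h

/-- Depth-`m` truncated (and neighbor-clamped) opinion process, as a function of the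
configuration. -/
def XF (G : SimpleGraph V) : ℕ → ℕ → V → ((ℕ × V) → Bool × Bool × V) → Bool
  | 0, t, v, g => (g (t, v)).2.1
  | m + 1, t, v, g =>
      if t = 0 then (g (0, v)).2.1
      else if (g (t, v)).1 then (g (t, v)).2.1
      else XF G m (t - 1) (clampN G v (g (t, v)).2.2) g

/-- Survival (no refresh, no time-0) of the backward path for `m` steps. -/
def SurvF (G : SimpleGraph V) : ℕ → ℕ → V → ((ℕ × V) → Bool × Bool × V) → Prop
  | 0, _, _, _ => True
  | m + 1, t, v, g => t ≠ 0 ∧ (g (t, v)).1 = false ∧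
      SurvF G m (t - 1) (clampN G v (g (t, v)).2.2) g

lemma SurvF.le_time {m t : ℕ} {v : V} {g : (ℕ × V) → Bool × Bool × V} :
    SurvF G m t v g → m ≤ t := by
  induction m generalizing t v with
  | zero => intro _; exact Nat.zero_le t
  | succ m ih =>
    rintro ⟨ht, -, hs⟩
    have := ih hs
    omega

lemma XF_stable {m t : ℕ} {v : V} {g : (ℕ × V) → Bool × Bool × V}
    (h : ¬ SurvF G m t v g) : ∀ m', m ≤ m' → XF G m' t v g = XF G m t v g := by
  induction m generalizing t v with
  | zero => exact absurd trivial h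
  | succ m ih =>
    intro m' hm'
    obtain ⟨m'', rfl⟩ : ∃ m'', m' = m'' + 1 := ⟨m' - 1, by omega⟩
    by_cases ht : t = 0
    · simp [XF, ht]
    · by_cases hxi : (g (t, v)).1
      · simp [XF, ht, hxi]
      · have hns : ¬ SurvF G m (t - 1) (clampN G v (g (t, v)).2.2) g := by
          intro hs
          exact h ⟨ht, by simpa using hxi, hs⟩
        simp only [XF, if_neg ht, hxi, if_false]
        exact ih hns m'' (by omega)

lemma not_survF_succ_time {t : ℕ} {v : V} {g : (ℕ × V) → Bool × Bool × V} :
    ¬ SurvF G (t + 1) t v g := fun h => by have := h.le_time; omega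

/-- Finite window of coordinates read by `XF`/`SurvF`. -/
def win (G : SimpleGraph V) (nf : V → Finset V) : ℕ → ℕ → V → Finset (ℕ × V)
  | 0, t, v => {(t, v)}
  | m + 1, t, v => insert (t, v) ((nf v).biUnion fun w => win G nf m (t - 1) w)

lemma win_time {nf : V → Finset V} :
    ∀ m t (v : V), ∀ p ∈ win G nf m t v, p.1 ≤ t ∧ t ≤ p.1 + m := by
  intro m
  induction m with
  | zero =>
    intro t v p hp
    simp only [win, Finset.mem_singleton] at hp
    subst hp; omega
  | succ m ih =>
    intro t v p hp
    simp only [win, Finset.mem_insert, Finset.mem_biUnion] at hp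
    rcases hp with rfl | ⟨w, _, hw⟩
    · omega
    · have := ih (t - 1) w p hw
      omega

lemma mem_win {nf : V → Finset V} (m t : ℕ) (v : V) : (t, v) ∈ win G nf m t v := by
  cases m with
  | zero => simp [win]
  | succ m => simp [win]

lemma XF_congr (hne : ∀ v : V, (G.neighborSet v).Nonempty)
    {nf : V → Finset V} (hnf : ∀ v, ∀ w ∈ G.neighborSet v, w ∈ nf v) :
    ∀ m t (v : V) g g', (∀ p ∈ win G nf m t v, g p = g' p) →
      XF G m t v g = XF G m t v g' := by
  intro m
  induction m with
  | zero =>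
    intro t v g g' h
    have := h (t, v) (mem_win 0 t v)
    simp [XF, this]
  | succ m ih =>
    intro t v g g' h
    have hv := h (t, v) (mem_win (m + 1) t v)
    by_cases ht : t = 0
    · subst ht; simp [XF, hv]
    · simp only [XF, if_neg ht, hv]
      by_cases hxi : (g' (t, v)).1
      · simp [hxi]
      · simp only [hxi, if_false]
        apply ih
        intro p hp
        apply h
        simp only [win, Finset.mem_insert, Finset.mem_biUnion]
        exact Or.inr ⟨clampN G v (g' (t, v)).2.2, hnf v _ (clampN_mem (hne v) _), hp⟩

lemma SurvF_congr (hne : ∀ v : V, (G.neighborSet v).Nonempty)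
    {nf : V → Finset V} (hnf : ∀ v, ∀ w ∈ G.neighborSet v, w ∈ nf v) :
    ∀ m t (v : V) g g', (∀ p ∈ win G nf m t v, g p = g' p) →
      (SurvF G m t v g ↔ SurvF G m t v g') := by
  intro m
  induction m with
  | zero => intro t v g g' _; simp [SurvF]
  | succ m ih =>
    intro t v g g' h
    have hv := h (t, v) (mem_win (m + 1) t v)
    simp only [SurvF, hv]
    constructor
    · rintro ⟨ht, hxi, hs⟩
      refine ⟨ht, hxi, ?_⟩
      rw [← ih (t - 1) _ g g' ?_]
      · exact hs
      · intro p hp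
        apply h
        simp only [win, Finset.mem_insert, Finset.mem_biUnion]
        exact Or.inr ⟨_, hnf v _ (clampN_mem (hne v) _), hp⟩
    · rintro ⟨ht, hxi, hs⟩
      refine ⟨ht, hxi, ?_⟩
      rw [ih (t - 1) _ g g' ?_]
      · exact hs
      · intro p hp
        apply h
        simp only [win, Finset.mem_insert, Finset.mem_biUnion]
        exact Or.inr ⟨_, hnf v _ (clampN_mem (hne v) _), hp⟩

/-- Time-shift of `XF`. -/
lemma XF_shift : ∀ m t (v : V) (s : ℕ) g, m ≤ t →
    XF G m (t + s) v g = XF G m t v (fun p => g (p.1 + s, p.2)) := by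
  intro m
  induction m with
  | zero => intro t v s g _; simp [XF]
  | succ m ih =>
    intro t v s g hmt
    have ht : t ≠ 0 := by omega
    have hts : t + s ≠ 0 := by omega
    simp only [XF, if_neg ht, if_neg hts]
    by_cases hxi : (g (t + s, v)).1
    · simp [hxi]
    · simp only [hxi, if_false]
      have : t + s - 1 = (t - 1) + s := by omega
      rw [this, ih (t - 1) _ s g (by omega)]

/-- All relevant neighbor choices are honest. -/
def GoodSet (M : NVM G ε) : Set M.space :=
  {ω | ∀ t v, M.eta t v ω ∈ G.neighborSet v}

lemma X_eq_XF_exact (M : NVM G ε) {ω : M.space} (hω : ω ∈ M.GoodSet) :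
    ∀ t (v : V), M.X t v ω = XF G (t + 1) t v (M.Zc ω) := by
  intro t
  induction t with
  | zero => intro v; simp [X, XF, fresh, Zc]
  | succ t ih =>
    intro v
    simp only [X, XF, Nat.succ_ne_zero, if_false]
    by_cases hxi : M.xi (t + 1) v ω
    · simp only [xi] at hxi
      simp [hxi, fresh, Zc, xi]
    · simp only [xi] at hxi
      simp only [Zc, hxi, if_false, Bool.false_eq_true, xi]
      have hcl : clampN G v (M.Z (t + 1, v).1 (t + 1, v).2 ω).2.2 = M.eta (t + 1) v ω := by
        simpa [eta] using clampN_eq (hω (t + 1) v)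
      simp only [Nat.add_sub_cancel]
      rw [show ((M.Z (t+1) v ω).2.2) = M.eta (t+1) v ω from rfl]
      rw [clampN_eq (hω (t + 1) v)]
      exact ih (M.eta (t + 1) v ω)

lemma X_eq_XF (M : NVM G ε) {ω : M.space} (hω : ω ∈ M.GoodSet) (m t : ℕ) (v : V)
    (hns : ¬ SurvF G m t v (M.Zc ω)) : M.X t v ω = XF G m t v (M.Zc ω) := by
  rw [X_eq_XF_exact M hω t v]
  rcases le_total m (t + 1) with h | h
  · exact XF_stable hns (t + 1) h
  · rw [← XF_stable not_survF_succ_time m h]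

end NVM


namespace NVM

variable {V : Type} {G : SimpleGraph V} {ε : ℝ}

/-- Extension of a partial configuration on a window `W`. -/
def extW [Nonempty V] (W : Finset (ℕ × V)) (a : {p // p ∈ W} → Bool × Bool × V) :
    (ℕ × V) → Bool × Bool × V :=
  fun p => if h : p ∈ W then a ⟨p, h⟩ else Classical.arbitrary _

/-- `φ` only depends on coordinates in `W`. -/
def Localized (W : Finset (ℕ × V)) (φ : ((ℕ × V) → Bool × Bool × V) → Prop) : Prop :=
  ∀ g g', (∀ p ∈ W, g p = g' p) → φ g → φ g'

/-- Atom event: the noise on the (time-shifted) window `W` equals `a`. -/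
def AtomS (M : NVM G ε) (s : ℕ) (W : Finset (ℕ × V))
    (a : {p // p ∈ W} → Bool × Bool × V) : Set M.space :=
  {ω | ∀ p : {p // p ∈ W}, M.Z (p.1.1 + s) p.1.2 ω = a p}

lemma meas_AtomS (M : NVM G ε) (s : ℕ) (W : Finset (ℕ × V))
    (a : {p // p ∈ W} → Bool × Bool × V) : MeasurableSet (M.AtomS s W a) := by
  have : M.AtomS s W a = ⋂ p : {p // p ∈ W}, M.atomSet (p.1.1 + s) p.1.2 (a p) := by
    ext ω; simp [AtomS, atomSet, Set.mem_iInter]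
  rw [this]
  exact MeasurableSet.iInter fun p => M.meas_atomSet _ _ _

lemma AtomS_disjoint (M : NVM G ε) (s : ℕ) (W : Finset (ℕ × V))
    {a b : {p // p ∈ W} → Bool × Bool × V} (hab : a ≠ b) :
    Disjoint (M.AtomS s W a) (M.AtomS s W b) := by
  obtain ⟨p, hp⟩ := Function.ne_iff.1 hab
  rw [Set.disjoint_left]
  intro ω ha hb
  exact hp ((ha p).symm.trans (hb p))

lemma P_AtomS [Nonempty V] (M : NVM G ε) (s : ℕ) (W : Finset (ℕ × V))
    (a : {p // p ∈ W} → Bool × Bool × V) :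
    M.P (M.AtomS s W a) = ∏ p ∈ W.attach, M.P (M.atomSet (p.1.1 + s) p.1.2 (a p)) := by
  have hinj : ∀ x ∈ W, ∀ y ∈ W, (fun p : ℕ × V => (p.1 + s, p.2)) x =
      (fun p : ℕ × V => (p.1 + s, p.2)) y → x = y := by
    intro x _ y _ h
    simp only [Prod.mk.injEq] at h
    exact Prod.ext (by omega) h.2
  have h := M.indep (W.image fun p => (p.1 + s, p.2))
      (fun q => extW W a (q.1 - s, q.2))
  have hset : {ω | ∀ p ∈ W.image fun p : ℕ × V => (p.1 + s, p.2),
      M.Z p.1 p.2 ω = extW W a (p.1 - s, p.2)} = M.AtomS s W a := by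
    ext ω
    simp only [Set.mem_setOf_eq, Finset.mem_image, forall_exists_index, and_imp, AtomS]
    constructor
    · intro h p
      have := h (p.1.1 + s, p.1.2) p.1 p.2 rfl
      simpa [extW, Nat.add_sub_cancel, dif_pos p.2] using this
    · rintro h q p hp rfl
      simpa [extW, Nat.add_sub_cancel, dif_pos hp] using h ⟨p, hp⟩
  rw [hset] at h
  rw [h, Finset.prod_image hinj, ← Finset.prod_attach]
  apply Finset.prod_congr rfl
  intro x _
  have : extW W a ((x : ℕ × V).1 + s - s, (x : ℕ × V).2) = a x := by
    simp [extW, Nat.add_sub_cancel, dif_pos x.2]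
  rw [this]
  rfl

variable [Nonempty V] [Countable V]

lemma cyl_rep (M : NVM G ε) (s : ℕ) (W : Finset (ℕ × V))
    (φ : ((ℕ × V) → Bool × Bool × V) → Prop) (hφ : Localized W φ) :
    {ω | φ (fun p => M.Z (p.1 + s) p.2 ω)} =
      ⋃ a : {a : {p // p ∈ W} → Bool × Bool × V // φ (extW W a)}, M.AtomS s W a.1 := by
  ext ω
  simp only [Set.mem_setOf_eq, Set.mem_iUnion]
  constructor
  · intro h
    refine ⟨⟨fun p => M.Z (p.1.1 + s) p.1.2 ω, ?_⟩, fun p => rfl⟩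
    exact hφ _ _ (fun p hp => by simp [extW, dif_pos hp]) h
  · rintro ⟨⟨a, ha⟩, hmem⟩
    refine hφ _ _ (fun p hp => ?_) ha
    simp only [extW, dif_pos hp]
    exact (hmem ⟨p, hp⟩).symm

lemma cylP (M : NVM G ε) (s : ℕ) (W : Finset (ℕ × V))
    (φ : ((ℕ × V) → Bool × Bool × V) → Prop) (hφ : Localized W φ) :
    M.P {ω | φ (fun p => M.Z (p.1 + s) p.2 ω)} =
      ∑' a : {a : {p // p ∈ W} → Bool × Bool × V // φ (extW W a)},
        M.P (M.AtomS s W a.1) := by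
  rw [cyl_rep M s W φ hφ]
  exact MeasureTheory.measure_iUnion
    (fun a b hab => M.AtomS_disjoint s W (fun h => hab (Subtype.ext h)))
    (fun a => M.meas_AtomS s W a.1)

lemma cyl_meas (M : NVM G ε) (s : ℕ) (W : Finset (ℕ × V))
    (φ : ((ℕ × V) → Bool × Bool × V) → Prop) (hφ : Localized W φ) :
    MeasurableSet {ω | φ (fun p => M.Z (p.1 + s) p.2 ω)} := by
  rw [cyl_rep M s W φ hφ]
  exact MeasurableSet.iUnion fun a => M.meas_AtomS s W a.1

lemma zc_zero (M : NVM G ε) (φ : ((ℕ × V) → Bool × Bool × V) → Prop) :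
    {ω | φ (fun p => M.Z (p.1 + 0) p.2 ω)} = {ω | φ (M.Zc ω)} := by
  simp only [Nat.add_zero]
  rfl

lemma cylP0 (M : NVM G ε) (W : Finset (ℕ × V))
    (φ : ((ℕ × V) → Bool × Bool × V) → Prop) (hφ : Localized W φ) :
    M.P {ω | φ (M.Zc ω)} =
      ∑' a : {a : {p // p ∈ W} → Bool × Bool × V // φ (extW W a)},
        M.P (M.AtomS 0 W a.1) := by
  rw [← zc_zero M φ]
  exact cylP M 0 W φ hφ

lemma cyl_meas0 (M : NVM G ε) (W : Finset (ℕ × V))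
    (φ : ((ℕ × V) → Bool × Bool × V) → Prop) (hφ : Localized W φ) :
    MeasurableSet {ω | φ (M.Zc ω)} := by
  rw [← zc_zero M φ]
  exact cyl_meas M 0 W φ hφ

/-- Time-shift invariance of cylinder events. -/
lemma cyl_shift (M : NVM G ε) (s : ℕ) (W : Finset (ℕ × V))
    (φ : ((ℕ × V) → Bool × Bool × V) → Prop) (hφ : Localized W φ) :
    M.P {ω | φ (fun p => M.Z (p.1 + s) p.2 ω)} = M.P {ω | φ (M.Zc ω)} := by
  rw [cylP M s W φ hφ, cylP0 M W φ hφ]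
  apply tsum_congr
  intro a
  rw [P_AtomS, P_AtomS]
  apply Finset.prod_congr rfl
  intro p _
  exact M.P_atomSet_shift _ _ _ _

/-- Independence of cylinder events over disjoint windows. -/
lemma AtomS_indep (M : NVM G ε) {W₁ W₂ : Finset (ℕ × V)} (hd : Disjoint W₁ W₂)
    (a : {p // p ∈ W₁} → Bool × Bool × V) (b : {p // p ∈ W₂} → Bool × Bool × V) :
    M.P (M.AtomS 0 W₁ a ∩ M.AtomS 0 W₂ b) = M.P (M.AtomS 0 W₁ a) * M.P (M.AtomS 0 W₂ b) := by
  classical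
  set cmb : (ℕ × V) → Bool × Bool × V := fun p =>
    if h : p ∈ W₁ then a ⟨p, h⟩ else if h : p ∈ W₂ then b ⟨p, h⟩ else Classical.arbitrary _
    with hcmb
  have h := M.indep (W₁ ∪ W₂) cmb
  have hset : {ω | ∀ p ∈ W₁ ∪ W₂, M.Z p.1 p.2 ω = cmb p} =
      M.AtomS 0 W₁ a ∩ M.AtomS 0 W₂ b := by
    ext ω
    simp only [Set.mem_setOf_eq, Finset.mem_union, Set.mem_inter_iff, AtomS]
    constructor
    · intro h
      constructor
      · intro p
        have := h p.1 (Or.inl p.2)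
        simpa [hcmb, dif_pos p.2, Nat.add_zero] using this
      · intro p
        have hp1 : p.1 ∉ W₁ := Finset.disjoint_right.1 hd p.2
        have := h p.1 (Or.inr p.2)
        simpa [hcmb, dif_neg hp1, dif_pos p.2, Nat.add_zero] using this
    · rintro ⟨h1, h2⟩ p hp
      rcases hp with hp | hp
      · simpa [hcmb, dif_pos hp, Nat.add_zero] using h1 ⟨p, hp⟩
      · have hp1 : p ∉ W₁ := Finset.disjoint_right.1 hd hp
        simpa [hcmb, dif_neg hp1, dif_pos hp, Nat.add_zero] using h2 ⟨p, hp⟩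
  rw [hset] at h
  rw [h, Finset.prod_union hd, P_AtomS, P_AtomS]
  congr 1
  · rw [← Finset.prod_attach W₁ fun p => M.P {ω | M.Z p.1 p.2 ω = cmb p}]
    apply Finset.prod_congr rfl
    intro x _
    have : cmb x.1 = a x := by simp [hcmb, dif_pos x.2]
    rw [this]
    rfl
  · rw [← Finset.prod_attach W₂ fun p => M.P {ω | M.Z p.1 p.2 ω = cmb p}]
    apply Finset.prod_congr rfl
    intro x _
    have hx1 : x.1 ∉ W₁ := Finset.disjoint_right.1 hd x.2
    have : cmb x.1 = b x := by simp [hcmb, dif_neg hx1, dif_pos x.2]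
    rw [this]
    rfl

lemma cyl_indep (M : NVM G ε) {W₁ W₂ : Finset (ℕ × V)}
    {φ₁ φ₂ : ((ℕ × V) → Bool × Bool × V) → Prop}
    (h₁ : Localized W₁ φ₁) (h₂ : Localized W₂ φ₂) (hd : Disjoint W₁ W₂) :
    M.P ({ω | φ₁ (M.Zc ω)} ∩ {ω | φ₂ (M.Zc ω)}) =
      M.P {ω | φ₁ (M.Zc ω)} * M.P {ω | φ₂ (M.Zc ω)} := by
  have hrep : {ω | φ₁ (M.Zc ω)} ∩ {ω | φ₂ (M.Zc ω)} =
      ⋃ ab : {a : {p // p ∈ W₁} → Bool × Bool × V // φ₁ (extW W₁ a)} ×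
             {b : {p // p ∈ W₂} → Bool × Bool × V // φ₂ (extW W₂ b)},
        M.AtomS 0 W₁ ab.1.1 ∩ M.AtomS 0 W₂ ab.2.1 := by
    have r1 := cyl_rep M 0 W₁ φ₁ h₁
    have r2 := cyl_rep M 0 W₂ φ₂ h₂
    rw [zc_zero] at r1 r2
    rw [r1, r2]
    ext ω
    simp only [Set.mem_inter_iff, Set.mem_iUnion]
    constructor
    · rintro ⟨⟨a, ha⟩, ⟨b, hb⟩⟩
      exact ⟨(a, b), ha, hb⟩
    · rintro ⟨ab, ha, hb⟩
      exact ⟨⟨ab.1, ha⟩, ⟨ab.2, hb⟩⟩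
  rw [hrep]
  rw [MeasureTheory.measure_iUnion ?_ ?_]
  · have : ∀ ab : {a : {p // p ∈ W₁} → Bool × Bool × V // φ₁ (extW W₁ a)} ×
             {b : {p // p ∈ W₂} → Bool × Bool × V // φ₂ (extW W₂ b)},
        M.P (M.AtomS 0 W₁ ab.1.1 ∩ M.AtomS 0 W₂ ab.2.1) =
          M.P (M.AtomS 0 W₁ ab.1.1) * M.P (M.AtomS 0 W₂ ab.2.1) :=
      fun ab => M.AtomS_indep hd ab.1.1 ab.2.1
    simp only [this]
    rw [ENNReal.tsum_prod']
    have r1 := cylP0 M W₁ φ₁ h₁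
    have r2 := cylP0 M W₂ φ₂ h₂
    rw [r1, r2]
    rw [← ENNReal.tsum_mul_right]
    apply tsum_congr
    intro a
    exact ENNReal.tsum_mul_left (a := M.P (M.AtomS 0 W₁ a.1))
      (f := fun b : {b // φ₂ (extW W₂ b)} => M.P (M.AtomS 0 W₂ b.1))
  · rintro ⟨a, b⟩ ⟨a', b'⟩ hab
    by_cases ha : a = a'
    · have hb : b ≠ b' := fun h => hab (by rw [ha, h])
      have := M.AtomS_disjoint 0 W₂ (a := b.1) (b := b'.1)
        (fun h => hb (Subtype.ext h))
      exact Disjoint.mono Set.inter_subset_right Set.inter_subset_right this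
    · have := M.AtomS_disjoint 0 W₁ (a := a.1) (b := a'.1)
        (fun h => ha (Subtype.ext h))
      exact Disjoint.mono Set.inter_subset_left Set.inter_subset_left this
  · exact fun ab => ((M.meas_AtomS 0 W₁ ab.1.1).inter (M.meas_AtomS 0 W₂ ab.2.1))

end NVM


namespace NVM

variable {V : Type} {G : SimpleGraph V} {ε : ℝ}
variable [Nonempty V] [Countable V]

omit [Nonempty V] [Countable V] in
lemma sum_nbr (v : V) (hlf : (G.neighborSet v).Finite) (hne : (G.neighborSet v).Nonempty) :
    ∑' w : V, (if w ∈ G.neighborSet v then ((Nat.card (G.neighborSet v) : ℝ≥0∞))⁻¹ else 0)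
      = 1 := by
  rw [tsum_eq_sum (s := hlf.toFinset) (fun w hw => by
    rw [if_neg]; simpa [Set.Finite.mem_toFinset] using hw)]
  have hcard : hlf.toFinset.card = Nat.card (G.neighborSet v) := by
    simp [Nat.card_eq_card_finite_toFinset hlf]
  have hpos : 0 < Nat.card (G.neighborSet v) := by
    rw [← hcard, Finset.card_pos, Set.Finite.toFinset_nonempty]
    exact hne
  calc ∑ w ∈ hlf.toFinset,
        (if w ∈ G.neighborSet v then ((Nat.card (G.neighborSet v) : ℝ≥0∞))⁻¹ else 0)
      = ∑ _w ∈ hlf.toFinset, ((Nat.card (G.neighborSet v) : ℝ≥0∞))⁻¹ := by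
        apply Finset.sum_congr rfl
        intro w hw
        rw [if_pos (hlf.mem_toFinset.1 hw)]
    _ = (hlf.toFinset.card : ℝ≥0∞) * ((Nat.card (G.neighborSet v) : ℝ≥0∞))⁻¹ := by
        rw [Finset.sum_const, nsmul_eq_mul]
    _ = 1 := by
        rw [hcard]
        exact ENNReal.mul_inv_cancel (by exact_mod_cast hpos.ne') (ENNReal.natCast_ne_top _)

lemma P_xi_false (M : NVM G ε) (hlf : ∀ v, (G.neighborSet v).Finite)
    (hne : ∀ v, (G.neighborSet v).Nonempty) (t : ℕ) (v : V) :
    M.P {ω | (M.Z t v ω).1 = false} = ENNReal.ofReal (1 - ε) := by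
  have hrep : {ω | (M.Z t v ω).1 = false} = ⋃ q : Bool × V, M.atomSet t v (false, q.1, q.2) := by
    ext ω
    simp only [Set.mem_setOf_eq, Set.mem_iUnion, atomSet]
    constructor
    · intro h
      exact ⟨((M.Z t v ω).2.1, (M.Z t v ω).2.2), by
        ext <;> simp [h]⟩
    · rintro ⟨q, hq⟩
      rw [hq]
  rw [hrep, MeasureTheory.measure_iUnion ?_ (fun q => M.meas_atomSet _ _ _)]
  · have heval : ∀ q : Bool × V, M.P (M.atomSet t v (false, q.1, q.2)) =
        (ENNReal.ofReal (1 - ε) * (1 / 2)) *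
          (if q.2 ∈ G.neighborSet v then ((Nat.card (G.neighborSet v) : ℝ≥0∞))⁻¹ else 0) := by
      intro q
      rw [P_atomSet]
      simp
    simp only [heval]
    rw [ENNReal.tsum_prod']
    have hinner : ∀ b : Bool, ∑' w : V, (ENNReal.ofReal (1 - ε) * (1 / 2)) *
        (if w ∈ G.neighborSet v then ((Nat.card (G.neighborSet v) : ℝ≥0∞))⁻¹ else 0) =
          ENNReal.ofReal (1 - ε) * (1 / 2) := by
      intro b
      rw [ENNReal.tsum_mul_left, sum_nbr v (hlf v) (hne v), mul_one]
    rw [tsum_bool, hinner true, ← mul_add]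
    have : (1 / 2 + 1 / 2 : ℝ≥0∞) = 1 := ENNReal.add_halves 1
    rw [this, mul_one]
  · intro q q' hqq'
    rw [Function.onFun, Set.disjoint_left]
    intro ω h1 h2
    apply hqq'
    simp only [atomSet, Set.mem_setOf_eq] at h1 h2
    rw [h1] at h2
    ext
    · exact (congrArg (fun c => (c : Bool × Bool × V).2.1) h2)
    · exact (congrArg (fun c => (c : Bool × Bool × V).2.2) h2)

lemma P_eta_bad (M : NVM G ε) (t : ℕ) (v : V) :
    M.P {ω | (M.Z t v ω).2.2 ∉ G.neighborSet v} = 0 := by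
  have hsub : {ω | (M.Z t v ω).2.2 ∉ G.neighborSet v} ⊆
      ⋃ c : {c : Bool × Bool × V // c.2.2 ∉ G.neighborSet v}, M.atomSet t v c.1 := by
    intro ω hω
    exact Set.mem_iUnion.2 ⟨⟨M.Z t v ω, hω⟩, rfl⟩
  refine le_antisymm (le_trans (MeasureTheory.measure_mono hsub) ?_) (zero_le)
  refine le_trans (MeasureTheory.measure_iUnion_le _) ?_
  have : ∀ c : {c : Bool × Bool × V // c.2.2 ∉ G.neighborSet v},
      M.P (M.atomSet t v c.1) = 0 := by
    intro c
    rw [P_atomSet, if_neg c.2, mul_zero]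
  simp [this]

lemma P_Good_compl (M : NVM G ε) : M.P M.GoodSetᶜ = 0 := by
  have hsub : M.GoodSetᶜ ⊆
      ⋃ p : ℕ × V, {ω | (M.Z p.1 p.2 ω).2.2 ∉ G.neighborSet p.2} := by
    intro ω hω
    simp only [GoodSet, Set.mem_compl_iff, Set.mem_setOf_eq, not_forall] at hω
    obtain ⟨t, v, h⟩ := hω
    exact Set.mem_iUnion.2 ⟨(t, v), h⟩
  refine le_antisymm (le_trans (MeasureTheory.measure_mono hsub) ?_) (zero_le)
  refine le_trans (MeasureTheory.measure_iUnion_le _) ?_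
  have heq : ∀ p : ℕ × V, M.P {ω | (M.Z p.1 p.2 ω).2.2 ∉ G.neighborSet p.2} = 0 :=
    fun p => M.P_eta_bad p.1 p.2
  simp only [heq, tsum_zero, le_refl]

lemma P_SurvF (M : NVM G ε) (hlf : ∀ v, (G.neighborSet v).Finite)
    (hne : ∀ v, (G.neighborSet v).Nonempty) :
    ∀ m t (v : V), M.P {ω | SurvF G m t v (M.Zc ω)} ≤ ENNReal.ofReal (1 - ε) ^ m := by
  haveI := M.isProb
  have hnf : ∀ v : V, ∀ w ∈ G.neighborSet v, w ∈ (hlf v).toFinset :=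
    fun v w hw => (hlf v).mem_toFinset.2 hw
  intro m
  induction m with
  | zero =>
    intro t v
    simp only [SurvF, pow_zero]
    exact le_trans (MeasureTheory.measure_mono (Set.subset_univ _)) (by simp)
  | succ m ih =>
    intro t v
    by_cases ht : t = 0
    · have : {ω | SurvF G (m + 1) t v (M.Zc ω)} = ∅ := by
        ext ω
        simp [SurvF, ht]
      rw [this]
      simp
    · set nf : V → Finset V := fun v => (hlf v).toFinset with hnfdef
      set φw : V → ((ℕ × V) → Bool × Bool × V) → Prop := fun w g =>
        (g (t, v)).1 = false ∧ clampN G v (g (t, v)).2.2 = w with hφw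
      have hloc1 : ∀ w, Localized {(t, v)} (φw w) := by
        intro w g g' hag
        have h := hag (t, v) (Finset.mem_singleton_self _)
        simp only [hφw]
        rw [h]
        exact id
      have hloc2 : ∀ w, Localized (win G nf m (t - 1) w)
          (fun g => SurvF G m (t - 1) w g) := by
        intro w g g' hag hs
        exact (SurvF_congr hne hnf m (t - 1) w g g' hag).1 hs
      have hrep : {ω | SurvF G (m + 1) t v (M.Zc ω)} =
          ⋃ w ∈ nf v, ({ω | φw w (M.Zc ω)} ∩ {ω | SurvF G m (t - 1) w (M.Zc ω)}) := by
        ext ω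
        simp only [Set.mem_setOf_eq, Set.mem_iUnion, Set.mem_inter_iff, SurvF]
        constructor
        · rintro ⟨ht', hxi, hs⟩
          refine ⟨clampN G v ((M.Zc ω) (t, v)).2.2, ?_, ⟨hxi, rfl⟩, hs⟩
          exact hnf v _ (clampN_mem (hne v) _)
        · rintro ⟨w, hw, ⟨hxi, hcl⟩, hs⟩
          exact ⟨ht, hxi, by rw [hcl]; exact hs⟩
      rw [hrep]
      refine le_trans (MeasureTheory.measure_biUnion_finset_le _ _) ?_
      have hterm : ∀ w ∈ nf v,
          M.P ({ω | φw w (M.Zc ω)} ∩ {ω | SurvF G m (t - 1) w (M.Zc ω)}) ≤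
            M.P {ω | φw w (M.Zc ω)} * ENNReal.ofReal (1 - ε) ^ m := by
        intro w _
        have hdisj : Disjoint ({(t, v)} : Finset (ℕ × V)) (win G nf m (t - 1) w) := by
          rw [Finset.disjoint_left]
          intro p hp hp2
          rw [Finset.mem_singleton] at hp
          subst hp
          have := win_time m (t - 1) w _ hp2
          omega
        rw [M.cyl_indep (hloc1 w) (hloc2 w) hdisj]
        exact mul_le_mul_right (ih (t - 1) w) _
      refine le_trans (Finset.sum_le_sum hterm) ?_
      rw [← Finset.sum_mul]
      have hxitot : ∑ w ∈ nf v, M.P {ω | φw w (M.Zc ω)} = ENNReal.ofReal (1 - ε) := by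
        rw [← MeasureTheory.measure_biUnion_finset ?_
          (fun w _ => M.cyl_meas0 {(t, v)} (φw w) (hloc1 w))]
        · have : (⋃ w ∈ nf v, {ω | φw w (M.Zc ω)}) = {ω | (M.Z t v ω).1 = false} := by
            ext ω
            simp only [Set.mem_iUnion, Set.mem_setOf_eq, hφw]
            constructor
            · rintro ⟨w, _, h1, -⟩
              exact h1
            · intro h
              exact ⟨clampN G v ((M.Zc ω) (t, v)).2.2,
                hnf v _ (clampN_mem (hne v) _), h, rfl⟩
          rw [this, M.P_xi_false hlf hne]
        · intro w _ w' _ hww'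
          rw [Function.onFun, Set.disjoint_left]
          intro ω h1 h2
          exact hww' (h1.2.symm.trans h2.2)
      rw [hxitot, pow_succ, mul_comm (ENNReal.ofReal (1 - ε) ^ m)]

end NVM


namespace NVM

variable {V : Type} {G : SimpleGraph V} {ε : ℝ}

/-- The 4-equal-opinions event. -/
def Aev (M : NVM G ε) (u : V) (d₁ d₂ d₃ t : ℕ) : Set M.space :=
  {ω | M.X t u ω = M.X (t + d₁) u ω ∧ M.X t u ω = M.X (t + d₂) u ω ∧
      M.X t u ω = M.X (t + d₃) u ω}

lemma qprob_eq_Aev (M : NVM G ε) (u : V) (d₁ d₂ d₃ t : ℕ) :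
    qprob M u d₁ d₂ d₃ t = (M.P (M.Aev u d₁ d₂ d₃ t)).toReal := rfl

/-- Truncated version of the 4-equal event, on configurations. -/
def φQ (G : SimpleGraph V) (u : V) (d₁ d₂ d₃ m i : ℕ) :
    ((ℕ × V) → Bool × Bool × V) → Prop := fun g =>
  XF G m i u g = XF G m (i + d₁) u g ∧ XF G m i u g = XF G m (i + d₂) u g ∧
    XF G m i u g = XF G m (i + d₃) u g

def WQ (G : SimpleGraph V) (nf : V → Finset V) (u : V) (d₁ d₂ d₃ m i : ℕ) :
    Finset (ℕ × V) :=
  (win G nf m i u ∪ win G nf m (i + d₁) u) ∪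
    (win G nf m (i + d₂) u ∪ win G nf m (i + d₃) u)

def AqSet (M : NVM G ε) (u : V) (d₁ d₂ d₃ m i : ℕ) : Set M.space :=
  {ω | φQ G u d₁ d₂ d₃ m i (M.Zc ω)}

lemma WQ_time {nf : V → Finset V} {u : V} {d₁ d₂ d₃ m i : ℕ}
    (h13 : d₁ ≤ d₃) (h23 : d₂ ≤ d₃) :
    ∀ p ∈ WQ G nf u d₁ d₂ d₃ m i, p.1 ≤ i + d₃ ∧ i ≤ p.1 + m := by
  intro p hp
  simp only [WQ, Finset.mem_union] at hp
  rcases hp with (hp | hp) | (hp | hp)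
  · have := win_time m i u p hp; omega
  · have := win_time m (i + d₁) u p hp; omega
  · have := win_time m (i + d₂) u p hp; omega
  · have := win_time m (i + d₃) u p hp; omega

lemma φQ_localized (hne : ∀ v : V, (G.neighborSet v).Nonempty)
    (hlf : ∀ v : V, (G.neighborSet v).Finite) {u : V} {d₁ d₂ d₃ m i : ℕ} :
    Localized (WQ G (fun v => (hlf v).toFinset) u d₁ d₂ d₃ m i)
      (φQ G u d₁ d₂ d₃ m i) := by
  intro g g' hag h
  have hnf : ∀ v : V, ∀ w ∈ G.neighborSet v, w ∈ (hlf v).toFinset :=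
    fun v w hw => (hlf v).mem_toFinset.2 hw
  have e0 : XF G m i u g = XF G m i u g' :=
    XF_congr hne hnf m i u g g' (fun p hp => hag p (by
      simp only [WQ, Finset.mem_union]; exact Or.inl (Or.inl hp)))
  have e1 : XF G m (i + d₁) u g = XF G m (i + d₁) u g' :=
    XF_congr hne hnf m (i + d₁) u g g' (fun p hp => hag p (by
      simp only [WQ, Finset.mem_union]; exact Or.inl (Or.inr hp)))
  have e2 : XF G m (i + d₂) u g = XF G m (i + d₂) u g' :=
    XF_congr hne hnf m (i + d₂) u g g' (fun p hp => hag p (by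
      simp only [WQ, Finset.mem_union]; exact Or.inr (Or.inl hp)))
  have e3 : XF G m (i + d₃) u g = XF G m (i + d₃) u g' :=
    XF_congr hne hnf m (i + d₃) u g g' (fun p hp => hag p (by
      simp only [WQ, Finset.mem_union]; exact Or.inr (Or.inr hp)))
  simp only [φQ] at h ⊢
  rw [← e0, ← e1, ← e2, ← e3]
  exact h

/-- The exceptional set outside which the event and its truncation agree. -/
def DevSet (M : NVM G ε) (u : V) (d₁ d₂ d₃ m i : ℕ) : Set M.space :=
  M.GoodSetᶜ ∪
    (({ω | SurvF G m i u (M.Zc ω)} ∪ {ω | SurvF G m (i + d₁) u (M.Zc ω)}) ∪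
      ({ω | SurvF G m (i + d₂) u (M.Zc ω)} ∪ {ω | SurvF G m (i + d₃) u (M.Zc ω)}))

lemma P_DevSet [Nonempty V] [Countable V] (M : NVM G ε)
    (hlf : ∀ v, (G.neighborSet v).Finite) (hne : ∀ v, (G.neighborSet v).Nonempty)
    (u : V) (d₁ d₂ d₃ m i : ℕ) :
    M.P (M.DevSet u d₁ d₂ d₃ m i) ≤ 4 * ENNReal.ofReal (1 - ε) ^ m := by
  have hs := M.P_SurvF hlf hne
  calc M.P (M.DevSet u d₁ d₂ d₃ m i)
      ≤ M.P M.GoodSetᶜ +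
        ((M.P {ω | SurvF G m i u (M.Zc ω)} + M.P {ω | SurvF G m (i + d₁) u (M.Zc ω)}) +
         (M.P {ω | SurvF G m (i + d₂) u (M.Zc ω)} +
           M.P {ω | SurvF G m (i + d₃) u (M.Zc ω)})) := by
        refine le_trans (MeasureTheory.measure_union_le _ _) ?_
        gcongr
        refine le_trans (MeasureTheory.measure_union_le _ _) ?_
        gcongr <;> exact MeasureTheory.measure_union_le _ _
    _ ≤ 0 + ((ENNReal.ofReal (1 - ε) ^ m + ENNReal.ofReal (1 - ε) ^ m) +
          (ENNReal.ofReal (1 - ε) ^ m + ENNReal.ofReal (1 - ε) ^ m)) := by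
        gcongr
        · exact le_of_eq (M.P_Good_compl)
        · exact hs m i u
        · exact hs m (i + d₁) u
        · exact hs m (i + d₂) u
        · exact hs m (i + d₃) u
    _ = 4 * ENNReal.ofReal (1 - ε) ^ m := by ring

lemma Aev_iff_Aq (M : NVM G ε) {u : V} {d₁ d₂ d₃ m i : ℕ} {ω : M.space}
    (h : ω ∉ M.DevSet u d₁ d₂ d₃ m i) :
    ω ∈ M.Aev u d₁ d₂ d₃ i ↔ ω ∈ M.AqSet u d₁ d₂ d₃ m i := by
  simp only [DevSet, Set.mem_union, not_or, Set.mem_compl_iff, not_not,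
    Set.mem_setOf_eq] at h
  obtain ⟨hg, ⟨hs0, hs1⟩, hs2, hs3⟩ := h
  have e0 := M.X_eq_XF hg m i u hs0
  have e1 := M.X_eq_XF hg m (i + d₁) u hs1
  have e2 := M.X_eq_XF hg m (i + d₂) u hs2
  have e3 := M.X_eq_XF hg m (i + d₃) u hs3
  simp only [Aev, AqSet, φQ, Set.mem_setOf_eq, e0, e1, e2, e3]

lemma P_Aev_le (M : NVM G ε) (u : V) (d₁ d₂ d₃ m i : ℕ) :
    M.P (M.Aev u d₁ d₂ d₃ i) ≤
      M.P (M.AqSet u d₁ d₂ d₃ m i) + M.P (M.DevSet u d₁ d₂ d₃ m i) := by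
  refine le_trans (MeasureTheory.measure_mono ?_) (MeasureTheory.measure_union_le _ _)
  intro ω hω
  by_cases hd : ω ∈ M.DevSet u d₁ d₂ d₃ m i
  · exact Or.inr hd
  · exact Or.inl ((M.Aev_iff_Aq hd).1 hω)

lemma P_Aq_le (M : NVM G ε) (u : V) (d₁ d₂ d₃ m i : ℕ) :
    M.P (M.AqSet u d₁ d₂ d₃ m i) ≤
      M.P (M.Aev u d₁ d₂ d₃ i) + M.P (M.DevSet u d₁ d₂ d₃ m i) := by
  refine le_trans (MeasureTheory.measure_mono ?_) (MeasureTheory.measure_union_le _ _)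
  intro ω hω
  by_cases hd : ω ∈ M.DevSet u d₁ d₂ d₃ m i
  · exact Or.inr hd
  · exact Or.inl ((M.Aev_iff_Aq hd).2 hω)

lemma φQ_shift {u : V} {d₁ d₂ d₃ m s : ℕ} (g : (ℕ × V) → Bool × Bool × V) :
    φQ G u d₁ d₂ d₃ m (m + s) g ↔
      φQ G u d₁ d₂ d₃ m m (fun p => g (p.1 + s, p.2)) := by
  have h0 := XF_shift (G := G) m m u s g (le_refl m)
  have h1 := XF_shift (G := G) m (m + d₁) u s g (by omega)
  have h2 := XF_shift (G := G) m (m + d₂) u s g (by omega)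
  have h3 := XF_shift (G := G) m (m + d₃) u s g (by omega)
  simp only [φQ]
  rw [show m + s + d₁ = m + d₁ + s by omega, show m + s + d₂ = m + d₂ + s by omega,
    show m + s + d₃ = m + d₃ + s by omega, h0, h1, h2, h3]

lemma P_Aq_shift [Nonempty V] [Countable V] (M : NVM G ε)
    (hlf : ∀ v, (G.neighborSet v).Finite) (hne : ∀ v, (G.neighborSet v).Nonempty)
    (u : V) (d₁ d₂ d₃ m i : ℕ) (hmi : m ≤ i) :
    M.P (M.AqSet u d₁ d₂ d₃ m i) = M.P (M.AqSet u d₁ d₂ d₃ m m) := by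
  obtain ⟨s, rfl⟩ : ∃ s, i = m + s := ⟨i - m, by omega⟩
  have hset : M.AqSet u d₁ d₂ d₃ m (m + s) =
      {ω | φQ G u d₁ d₂ d₃ m m (fun p => M.Z (p.1 + s) p.2 ω)} := by
    ext ω
    exact φQ_shift (M.Zc ω)
  rw [hset]
  exact M.cyl_shift s (WQ G (fun v => (hlf v).toFinset) u d₁ d₂ d₃ m m) _
    (φQ_localized hne hlf)

lemma P_Aev_eq_Aq [Nonempty V] [Countable V] (M : NVM G ε)
    {u : V} {d₁ d₂ d₃ : ℕ} (h13 : d₁ ≤ d₃) (h23 : d₂ ≤ d₃) (i : ℕ) :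
    M.P (M.Aev u d₁ d₂ d₃ i) = M.P (M.AqSet u d₁ d₂ d₃ (i + d₃ + 1) i) := by
  have hiff : ∀ ω ∈ M.GoodSet,
      (ω ∈ M.Aev u d₁ d₂ d₃ i ↔ ω ∈ M.AqSet u d₁ d₂ d₃ (i + d₃ + 1) i) := by
    intro ω hg
    have hns : ∀ t, t ≤ i + d₃ → ¬ SurvF G (i + d₃ + 1) t u (M.Zc ω) := by
      intro t ht hs
      have := hs.le_time
      omega
    have e0 := M.X_eq_XF hg (i + d₃ + 1) i u (hns i (by omega))
    have e1 := M.X_eq_XF hg (i + d₃ + 1) (i + d₁) u (hns _ (by omega))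
    have e2 := M.X_eq_XF hg (i + d₃ + 1) (i + d₂) u (hns _ (by omega))
    have e3 := M.X_eq_XF hg (i + d₃ + 1) (i + d₃) u (hns _ (by omega))
    simp only [Aev, AqSet, φQ, Set.mem_setOf_eq, e0, e1, e2, e3]
  apply le_antisymm
  · calc M.P (M.Aev u d₁ d₂ d₃ i)
        ≤ M.P (M.AqSet u d₁ d₂ d₃ (i + d₃ + 1) i ∪ M.GoodSetᶜ) := by
          apply MeasureTheory.measure_mono
          intro ω hω
          by_cases hg : ω ∈ M.GoodSet
          · exact Or.inl ((hiff ω hg).1 hω)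
          · exact Or.inr hg
      _ ≤ M.P (M.AqSet u d₁ d₂ d₃ (i + d₃ + 1) i) + M.P M.GoodSetᶜ :=
          MeasureTheory.measure_union_le _ _
      _ = M.P (M.AqSet u d₁ d₂ d₃ (i + d₃ + 1) i) := by rw [M.P_Good_compl, add_zero]
  · calc M.P (M.AqSet u d₁ d₂ d₃ (i + d₃ + 1) i)
        ≤ M.P (M.Aev u d₁ d₂ d₃ i ∪ M.GoodSetᶜ) := by
          apply MeasureTheory.measure_mono
          intro ω hω
          by_cases hg : ω ∈ M.GoodSet
          · exact Or.inl ((hiff ω hg).2 hω)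
          · exact Or.inr hg
      _ ≤ M.P (M.Aev u d₁ d₂ d₃ i) + M.P M.GoodSetᶜ :=
          MeasureTheory.measure_union_le _ _
      _ = M.P (M.Aev u d₁ d₂ d₃ i) := by rw [M.P_Good_compl, add_zero]

lemma P_Aq_inter [Nonempty V] [Countable V] (M : NVM G ε)
    (hlf : ∀ v, (G.neighborSet v).Finite) (hne : ∀ v, (G.neighborSet v).Nonempty)
    {u : V} {d₁ d₂ d₃ : ℕ} (h13 : d₁ ≤ d₃) (h23 : d₂ ≤ d₃) (i m j : ℕ)
    (hj : j = i + d₃ + 1 + m) :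
    M.P (M.AqSet u d₁ d₂ d₃ (i + d₃ + 1) i ∩ M.AqSet u d₁ d₂ d₃ m j) =
      M.P (M.AqSet u d₁ d₂ d₃ (i + d₃ + 1) i) * M.P (M.AqSet u d₁ d₂ d₃ m j) := by
  apply M.cyl_indep (φQ_localized hne hlf) (φQ_localized hne hlf)
  rw [Finset.disjoint_left]
  intro p hp1 hp2
  have t1 := WQ_time h13 h23 p hp1
  have t2 := WQ_time h13 h23 p hp2
  omega

lemma meas_X [Countable V] (M : NVM G ε) :
    ∀ t (v : V) (b : Bool), MeasurableSet {ω | M.X t v ω = b} := by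
  intro t
  induction t with
  | zero =>
    intro v b
    have hrep : {ω | M.X 0 v ω = b} =
        ⋃ c : {c : Bool × Bool × V // c.2.1 = b}, M.atomSet 0 v c.1 := by
      ext ω
      simp only [X, fresh, Set.mem_iUnion, atomSet, Set.mem_setOf_eq]
      constructor
      · intro h
        exact ⟨⟨M.Z 0 v ω, h⟩, rfl⟩
      · rintro ⟨⟨c, hc⟩, h⟩
        rw [h]
        exact hc
    rw [hrep]
    exact MeasurableSet.iUnion fun c => M.meas_atomSet _ _ _
  | succ t ih =>
    intro v b
    have hrep : {ω | M.X (t + 1) v ω = b} =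
        (⋃ c : {c : Bool × Bool × V // c.1 = true ∧ c.2.1 = b},
            M.atomSet (t + 1) v c.1) ∪
          ⋃ w : V, ((⋃ c : {c : Bool × Bool × V // c.1 = false ∧ c.2.2 = w},
            M.atomSet (t + 1) v c.1) ∩ {ω | M.X t w ω = b}) := by
      ext ω
      simp only [X, xi, fresh, eta, Set.mem_union, Set.mem_iUnion, Set.mem_inter_iff,
        atomSet, Set.mem_setOf_eq]
      by_cases hxi : (M.Z (t + 1) v ω).1
      · simp only [hxi, if_true]
        constructor
        · intro h
          exact Or.inl ⟨⟨M.Z (t + 1) v ω, hxi, h⟩, rfl⟩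
        · rintro (⟨⟨c, hc1, hc2⟩, h⟩ | ⟨w, ⟨⟨c, hc1, hc2⟩, h⟩, hX⟩)
          · rw [h]; exact hc2
          · rw [h] at hxi; rw [hc1] at hxi; exact absurd hxi (by simp)
      · simp only [hxi, if_false]
        rw [Bool.not_eq_true] at hxi
        constructor
        · intro h
          refine Or.inr ⟨(M.Z (t + 1) v ω).2.2, ⟨⟨M.Z (t + 1) v ω, hxi, rfl⟩, rfl⟩, h⟩
        · rintro (⟨⟨c, hc1, hc2⟩, h⟩ | ⟨w, ⟨⟨c, hc1, hc2⟩, h⟩, hX⟩)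
          · rw [h, hc1] at hxi; exact absurd hxi (by simp)
          · simp only [Bool.false_eq_true, if_false]
            have hw : (M.Z (t + 1) v ω).2.2 = w := by rw [h]; exact hc2
            rw [hw]
            exact hX
    rw [hrep]
    refine MeasurableSet.union (MeasurableSet.iUnion fun c => M.meas_atomSet _ _ _) ?_
    exact MeasurableSet.iUnion fun w =>
      (MeasurableSet.iUnion fun c => M.meas_atomSet _ _ _).inter (ih w b)

lemma meas_X_eq [Countable V] (M : NVM G ε) (t t' : ℕ) (v : V) :
    MeasurableSet {ω | M.X t v ω = M.X t' v ω} := by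
  have hrep : {ω | M.X t v ω = M.X t' v ω} =
      ⋃ b : Bool, ({ω | M.X t v ω = b} ∩ {ω | M.X t' v ω = b}) := by
    ext ω
    simp only [Set.mem_iUnion, Set.mem_inter_iff, Set.mem_setOf_eq]
    constructor
    · intro h
      exact ⟨M.X t' v ω, h, rfl⟩
    · rintro ⟨b, h1, h2⟩
      rw [h1, h2]
  rw [hrep]
  exact MeasurableSet.iUnion fun b => (M.meas_X t v b).inter (M.meas_X t' v b)

lemma meas_Aev [Countable V] (M : NVM G ε) (u : V) (d₁ d₂ d₃ t : ℕ) :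
    MeasurableSet (M.Aev u d₁ d₂ d₃ t) := by
  have : M.Aev u d₁ d₂ d₃ t = {ω | M.X t u ω = M.X (t + d₁) u ω} ∩
      ({ω | M.X t u ω = M.X (t + d₂) u ω} ∩ {ω | M.X t u ω = M.X (t + d₃) u ω}) := rfl
  rw [this]
  exact (M.meas_X_eq _ _ _).inter ((M.meas_X_eq _ _ _).inter (M.meas_X_eq _ _ _))

end NVM


section Graph

variable {V : Type} {G : SimpleGraph V} {ε : ℝ}

lemma countable_of_connected (hG : G.Connected)
    (hlf : ∀ v, (G.neighborSet v).Finite) : Countable V := by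
  obtain ⟨u⟩ := hG.nonempty
  let S : ℕ → Set V := fun n =>
    Nat.rec {u} (fun _ s => s ∪ ⋃ v ∈ s, G.neighborSet v) n
  have hfin : ∀ n, (S n).Finite := by
    intro n
    induction n with
    | zero => exact Set.finite_singleton u
    | succ n ih => exact ih.union (Set.Finite.biUnion ih fun v _ => hlf v)
  have hstep : ∀ n (v w : V), v ∈ S n → G.Adj v w → w ∈ S (n + 1) := by
    intro n v w hv ha
    exact Or.inr (Set.mem_biUnion hv ha)
  have hwalk : ∀ (v w : V) (p : G.Walk v w) (n : ℕ), v ∈ S n → w ∈ S (n + p.length) := by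
    intro v w p
    induction p with
    | nil => intro n h; simpa using h
    | @cons v x w hadj p ih =>
      intro n hv
      have h2 := ih (n + 1) (hstep n _ _ hv hadj)
      rw [SimpleGraph.Walk.length_cons]
      rw [show n + (p.length + 1) = n + 1 + p.length by omega]
      exact h2
  have hcover : (Set.univ : Set V) ⊆ ⋃ n, S n := by
    intro v _
    obtain ⟨p⟩ := hG.preconnected u v
    exact Set.mem_iUnion.2 ⟨0 + p.length, hwalk u v p 0 (by exact rfl)⟩
  have hcnt : (Set.univ : Set V).Countable :=
    Set.Countable.mono hcover (Set.countable_iUnion fun n => (hfin n).countable)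
  exact Set.countable_univ_iff.1 hcnt

lemma nonempty_nbr [Countable V] (hG : G.Connected) (M : NVM G ε) (v : V) :
    (G.neighborSet v).Nonempty := by
  by_contra h
  rw [Set.not_nonempty_iff_eq_empty] at h
  haveI := M.isProb
  have huniv : (Set.univ : Set M.space) = ⋃ c : Bool × Bool × V, M.atomSet 0 v c := by
    ext ω
    simp only [Set.mem_univ, true_iff, Set.mem_iUnion, NVM.atomSet, Set.mem_setOf_eq]
    exact ⟨M.Z 0 v ω, rfl⟩
  have hle : M.P Set.univ ≤ 0 := by
    rw [huniv]
    refine le_trans (MeasureTheory.measure_iUnion_le _) ?_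
    have : ∀ c : Bool × Bool × V, M.P (M.atomSet 0 v c) = 0 := by
      intro c
      rw [M.P_atomSet]
      simp only [h, Set.mem_empty_iff_false, if_false, mul_zero]
    simp [this]
  rw [MeasureTheory.measure_univ] at hle
  simp at hle

end Graph

section RealHelpers

open MeasureTheory

lemma toReal_abs_sub_le {α : Type} [MeasurableSpace α] {μ : MeasureTheory.Measure α}
    [MeasureTheory.IsProbabilityMeasure μ] {A B : Set α} {η : ℝ≥0∞}
    (h1 : μ A ≤ μ B + η) (h2 : μ B ≤ μ A + η) (hη : η ≠ ⊤) :
    |(μ A).toReal - (μ B).toReal| ≤ η.toReal := by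
  rw [abs_sub_le_iff]
  constructor
  · have h := ENNReal.toReal_mono (ENNReal.add_ne_top.2 ⟨measure_ne_top μ B, hη⟩) h1
    rw [ENNReal.toReal_add (measure_ne_top μ B) hη] at h
    linarith
  · have h := ENNReal.toReal_mono (ENNReal.add_ne_top.2 ⟨measure_ne_top μ A, hη⟩) h2
    rw [ENNReal.toReal_add (measure_ne_top μ A) hη] at h
    linarith

lemma sum_geom_two {β : ℝ} (h0 : 0 ≤ β) (h1 : β < 1) (i n : ℕ) :
    ∑ j ∈ Finset.Icc 1 n, β ^ (i - j) * β ^ (j - i) ≤ 2 * (1 - β)⁻¹ := by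
  classical
  rw [← Finset.sum_filter_add_sum_filter_not (Finset.Icc 1 n) (fun j => j ≤ i)]
  have hb1 : ∑ j ∈ (Finset.Icc 1 n).filter (fun j => j ≤ i), β ^ (i - j) * β ^ (j - i)
      ≤ (1 - β)⁻¹ := by
    have he : ∀ j ∈ (Finset.Icc 1 n).filter (fun j => j ≤ i),
        β ^ (i - j) * β ^ (j - i) = β ^ (i - j) := by
      intro j hj
      rw [Finset.mem_filter] at hj
      rw [show j - i = 0 by omega, pow_zero, mul_one]
    rw [Finset.sum_congr rfl he]
    have himg : ∑ j ∈ (Finset.Icc 1 n).filter (fun j => j ≤ i), β ^ (i - j)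
        = ∑ k ∈ ((Finset.Icc 1 n).filter (fun j => j ≤ i)).image (fun j => i - j), β ^ k := by
      rw [Finset.sum_image]
      intro x hx y hy hxy
      rw [Finset.mem_coe, Finset.mem_filter] at hx hy
      dsimp only at hxy
      omega
    rw [himg]
    refine le_trans (Finset.sum_le_sum_of_subset_of_nonneg ?_
      (fun k _ _ => pow_nonneg h0 k)) (geom_sum_le_inv h0 h1 (i + 1))
    intro k hk
    rw [Finset.mem_image] at hk
    obtain ⟨j, hj, rfl⟩ := hk
    rw [Finset.mem_range]
    omega
  have hb2 : ∑ j ∈ (Finset.Icc 1 n).filter (fun j => ¬ j ≤ i), β ^ (i - j) * β ^ (j - i)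
      ≤ (1 - β)⁻¹ := by
    have he : ∀ j ∈ (Finset.Icc 1 n).filter (fun j => ¬ j ≤ i),
        β ^ (i - j) * β ^ (j - i) = β ^ (j - i) := by
      intro j hj
      rw [Finset.mem_filter] at hj
      rw [show i - j = 0 by omega, pow_zero, one_mul]
    rw [Finset.sum_congr rfl he]
    have himg : ∑ j ∈ (Finset.Icc 1 n).filter (fun j => ¬ j ≤ i), β ^ (j - i)
        = ∑ k ∈ ((Finset.Icc 1 n).filter (fun j => ¬ j ≤ i)).image (fun j => j - i),
            β ^ k := by
      rw [Finset.sum_image]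
      intro x hx y hy hxy
      rw [Finset.mem_coe, Finset.mem_filter] at hx hy
      dsimp only at hxy
      omega
    rw [himg]
    refine le_trans (Finset.sum_le_sum_of_subset_of_nonneg ?_
      (fun k _ _ => pow_nonneg h0 k)) (geom_sum_le_inv h0 h1 (n + 1))
    intro k hk
    rw [Finset.mem_image] at hk
    obtain ⟨j, hj, rfl⟩ := hk
    rw [Finset.mem_filter, Finset.mem_Icc] at hj
    rw [Finset.mem_range]
    omega
  linarith

end RealHelpers


namespace NVM

variable {V : Type} {G : SimpleGraph V} {ε : ℝ}

lemma obs_eq_iff (M : NVM G ε) (u : V) (ω : M.space) (s s' : ℕ) :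
    (M.obs u s ω = M.obs u s' ω) ↔ (M.X s u ω = M.X s' u ω) := by
  unfold obs
  cases hX : M.X s u ω <;> cases hX' : M.X s' u ω <;> simp

open Fin.NatCast in
lemma Sstat3_rep (M : NVM G ε) (u : V) {d₁ d₂ d₃ : ℕ} (h13 : d₁ ≤ d₃) (h23 : d₂ ≤ d₃)
    (t : ℕ) (ht : d₃ ≤ t) (ω : M.space) :
    Sstat3 d₁ d₂ d₃ t (fun i => M.obs u i ω) =
      (1 / ((t - d₃ : ℕ) : ℝ)) * ∑ i ∈ Finset.Icc 1 (t - d₃),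
        (M.Aev u d₁ d₂ d₃ i).indicator (fun _ => (1 : ℝ)) ω := by
  unfold Sstat3
  congr 1
  apply Finset.sum_congr rfl
  intro i hi
  rw [Finset.mem_Icc] at hi
  have hval : ∀ k : ℕ, k < t + 1 → ((k : Fin (t + 1)) : ℕ) = k := fun k hk =>
    Fin.val_cast_of_lt hk
  have hval2 : ∀ k l : ℕ, k + l < t + 1 →
      (((k : Fin (t + 1)) + (l : Fin (t + 1)) : Fin (t + 1)) : ℕ) = k + l := by
    intro k l h
    rw [Fin.val_add, Fin.val_cast_of_lt (by omega), Fin.val_cast_of_lt (by omega),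
      Nat.mod_eq_of_lt h]
  simp only [hval i (by omega), hval2 i d₁ (by omega), hval2 i d₂ (by omega),
    hval2 i d₃ (by omega)]
  rw [Set.indicator_apply]
  refine if_congr ?_ rfl rfl
  simp only [Aev, Set.mem_setOf_eq, M.obs_eq_iff u ω]

lemma meas_Fstat [Countable V] (M : NVM G ε) (u : V) {d₁ d₂ d₃ : ℕ}
    (h13 : d₁ ≤ d₃) (h23 : d₂ ≤ d₃) (t : ℕ) (ht : d₃ ≤ t) :
    Measurable (fun ω => Sstat3 d₁ d₂ d₃ t (fun i => M.obs u i ω)) := by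
  have : (fun ω => Sstat3 d₁ d₂ d₃ t (fun i => M.obs u i ω)) =
      fun ω => (1 / ((t - d₃ : ℕ) : ℝ)) * ∑ i ∈ Finset.Icc 1 (t - d₃),
        (M.Aev u d₁ d₂ d₃ i).indicator (fun _ => (1 : ℝ)) ω :=
    funext fun ω => M.Sstat3_rep u h13 h23 t ht ω
  rw [this]
  exact (Finset.measurable_sum _ fun i _ =>
    (measurable_const.indicator (M.meas_Aev u d₁ d₂ d₃ i))).const_mul _

lemma prob_toReal_le_one {α : Type} [MeasurableSpace α] {μ : MeasureTheory.Measure α}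
    [MeasureTheory.IsProbabilityMeasure μ] (s : Set α) : (μ s).toReal ≤ 1 := by
  have h := MeasureTheory.prob_le_one (μ := μ) (s := s)
  have := ENNReal.toReal_mono ENNReal.one_ne_top h
  simpa using this

end NVM


namespace NVM

variable {V : Type} {G : SimpleGraph V} {ε : ℝ}

lemma Aev_iff_Aq_exact (M : NVM G ε) {u : V} {d₁ d₂ d₃ : ℕ}
    (h13 : d₁ ≤ d₃) (h23 : d₂ ≤ d₃) (i : ℕ) {ω : M.space} (hg : ω ∈ M.GoodSet) :
    ω ∈ M.Aev u d₁ d₂ d₃ i ↔ ω ∈ M.AqSet u d₁ d₂ d₃ (i + d₃ + 1) i := by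
  have hns : ∀ t, t ≤ i + d₃ → ¬ SurvF G (i + d₃ + 1) t u (M.Zc ω) := by
    intro t ht hs
    have := hs.le_time
    omega
  have e0 := M.X_eq_XF hg (i + d₃ + 1) i u (hns i (by omega))
  have e1 := M.X_eq_XF hg (i + d₃ + 1) (i + d₁) u (hns _ (by omega))
  have e2 := M.X_eq_XF hg (i + d₃ + 1) (i + d₂) u (hns _ (by omega))
  have e3 := M.X_eq_XF hg (i + d₃ + 1) (i + d₃) u (hns _ (by omega))
  simp only [Aev, AqSet, φQ, Set.mem_setOf_eq, e0, e1, e2, e3]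

lemma qlim_props [Nonempty V] [Countable V]
    (M : NVM G ε) (hε : ε ∈ Set.Ioo (0 : ℝ) 1)
    (hlf : ∀ v, (G.neighborSet v).Finite) (hne : ∀ v, (G.neighborSet v).Nonempty)
    (u : V) (d₁ d₂ d₃ : ℕ) (h13 : d₁ ≤ d₃) (h23 : d₂ ≤ d₃) :
    ∃ q : ℝ, qlim M u d₁ d₂ d₃ = q ∧ 0 ≤ q ∧ q ≤ 1 ∧
      (∀ i, |(M.P (M.Aev u d₁ d₂ d₃ i)).toReal - q| ≤ 8 * (1 - ε) ^ i) ∧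
      (∀ i m j, j = i + d₃ + 1 + m →
        |(M.P (M.Aev u d₁ d₂ d₃ i ∩ M.Aev u d₁ d₂ d₃ j)).toReal -
          (M.P (M.Aev u d₁ d₂ d₃ i)).toReal * (M.P (M.Aev u d₁ d₂ d₃ j)).toReal| ≤
            8 * (1 - ε) ^ m) := by
  haveI := M.isProb
  obtain ⟨hε0, hε1⟩ := hε
  have hβ0 : (0 : ℝ) ≤ 1 - ε := by linarith
  have hβ1 : (1 : ℝ) - ε < 1 := by linarith
  have htop : ∀ m : ℕ, (4 * ENNReal.ofReal (1 - ε) ^ m) ≠ ⊤ := by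
    intro m
    exact ENNReal.mul_ne_top (by simp) (ENNReal.pow_ne_top ENNReal.ofReal_ne_top)
  have htoReal : ∀ m : ℕ, (4 * ENNReal.ofReal (1 - ε) ^ m).toReal = 4 * (1 - ε) ^ m := by
    intro m
    rw [ENNReal.toReal_mul, ENNReal.toReal_pow, ENNReal.toReal_ofReal hβ0]
    norm_num
  set a : ℕ → ℝ := fun i => (M.P (M.Aev u d₁ d₂ d₃ i)).toReal with ha
  have ha0 : ∀ i, 0 ≤ a i := fun i => ENNReal.toReal_nonneg
  have ha1 : ∀ i, a i ≤ 1 := fun i => prob_toReal_le_one _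
  have key1 : ∀ m i, |a i - (M.P (M.AqSet u d₁ d₂ d₃ m i)).toReal| ≤ 4 * (1 - ε) ^ m := by
    intro m i
    have hDev := M.P_DevSet hlf hne u d₁ d₂ d₃ m i
    have h1 : M.P (M.Aev u d₁ d₂ d₃ i) ≤
        M.P (M.AqSet u d₁ d₂ d₃ m i) + 4 * ENNReal.ofReal (1 - ε) ^ m :=
      le_trans (M.P_Aev_le u d₁ d₂ d₃ m i) (by gcongr)
    have h2 : M.P (M.AqSet u d₁ d₂ d₃ m i) ≤
        M.P (M.Aev u d₁ d₂ d₃ i) + 4 * ENNReal.ofReal (1 - ε) ^ m :=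
      le_trans (M.P_Aq_le u d₁ d₂ d₃ m i) (by gcongr)
    have := toReal_abs_sub_le h1 h2 (htop m)
    rwa [htoReal m] at this
  have key3 : ∀ m i, m ≤ i →
      |a i - (M.P (M.AqSet u d₁ d₂ d₃ m m)).toReal| ≤ 4 * (1 - ε) ^ m := by
    intro m i h
    rw [← M.P_Aq_shift hlf hne u d₁ d₂ d₃ m i h]
    exact key1 m i
  have hcauchy : CauchySeq a := by
    apply cauchySeq_of_le_geometric (1 - ε) 8 hβ1
    intro n
    rw [Real.dist_eq]
    calc |a n - a (n + 1)|
        ≤ |a n - (M.P (M.AqSet u d₁ d₂ d₃ n n)).toReal| +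
          |(M.P (M.AqSet u d₁ d₂ d₃ n n)).toReal - a (n + 1)| := abs_sub_le _ _ _
      _ ≤ 4 * (1 - ε) ^ n + 4 * (1 - ε) ^ n := by
          refine add_le_add (key3 n n le_rfl) ?_
          rw [abs_sub_comm]
          exact key3 n (n + 1) (by omega)
      _ = 8 * (1 - ε) ^ n := by ring
  obtain ⟨q, hq⟩ := cauchySeq_tendsto_of_complete hcauchy
  have hqlim : qlim M u d₁ d₂ d₃ = q := Filter.Tendsto.limsup_eq hq
  have hq0 : 0 ≤ q := ge_of_tendsto' hq ha0
  have hq1 : q ≤ 1 := le_of_tendsto' hq ha1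
  have key4 : ∀ i, |a i - q| ≤ 8 * (1 - ε) ^ i := by
    intro i
    have h8 : ∀ j, i ≤ j → |a i - a j| ≤ 8 * (1 - ε) ^ i := by
      intro j hj
      calc |a i - a j|
          ≤ |a i - (M.P (M.AqSet u d₁ d₂ d₃ i i)).toReal| +
            |(M.P (M.AqSet u d₁ d₂ d₃ i i)).toReal - a j| := abs_sub_le _ _ _
        _ ≤ 4 * (1 - ε) ^ i + 4 * (1 - ε) ^ i := by
            refine add_le_add (key3 i i le_rfl) ?_
            rw [abs_sub_comm]
            exact key3 i j hj
        _ = 8 * (1 - ε) ^ i := by ring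
    have hten : Filter.Tendsto (fun j => |a i - a j|) atTop (𝓝 |a i - q|) :=
      (tendsto_const_nhds.sub hq).abs
    exact le_of_tendsto hten (Filter.eventually_atTop.2 ⟨i, h8⟩)
  refine ⟨q, hqlim, hq0, hq1, key4, ?_⟩
  intro i m j hj
  have hDev := M.P_DevSet hlf hne u d₁ d₂ d₃ m j
  have hGsub : M.GoodSetᶜ ⊆ M.DevSet u d₁ d₂ d₃ m j := Set.subset_union_left
  have hsub1 : M.Aev u d₁ d₂ d₃ i ∩ M.Aev u d₁ d₂ d₃ j ⊆
      (M.AqSet u d₁ d₂ d₃ (i + d₃ + 1) i ∩ M.AqSet u d₁ d₂ d₃ m j) ∪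
        M.DevSet u d₁ d₂ d₃ m j := by
    intro ω hω
    by_cases hd : ω ∈ M.DevSet u d₁ d₂ d₃ m j
    · exact Or.inr hd
    · have hg : ω ∈ M.GoodSet := by
        by_contra hg
        exact hd (hGsub hg)
      exact Or.inl ⟨(M.Aev_iff_Aq_exact h13 h23 i hg).1 hω.1, (M.Aev_iff_Aq hd).1 hω.2⟩
  have hsub2 : M.AqSet u d₁ d₂ d₃ (i + d₃ + 1) i ∩ M.AqSet u d₁ d₂ d₃ m j ⊆
      (M.Aev u d₁ d₂ d₃ i ∩ M.Aev u d₁ d₂ d₃ j) ∪ M.DevSet u d₁ d₂ d₃ m j := by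
    intro ω hω
    by_cases hd : ω ∈ M.DevSet u d₁ d₂ d₃ m j
    · exact Or.inr hd
    · have hg : ω ∈ M.GoodSet := by
        by_contra hg
        exact hd (hGsub hg)
      exact Or.inl ⟨(M.Aev_iff_Aq_exact h13 h23 i hg).2 hω.1, (M.Aev_iff_Aq hd).2 hω.2⟩
  have h1 : M.P (M.Aev u d₁ d₂ d₃ i ∩ M.Aev u d₁ d₂ d₃ j) ≤
      M.P (M.AqSet u d₁ d₂ d₃ (i + d₃ + 1) i ∩ M.AqSet u d₁ d₂ d₃ m j) +
        4 * ENNReal.ofReal (1 - ε) ^ m := by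
    refine le_trans (MeasureTheory.measure_mono hsub1) ?_
    refine le_trans (MeasureTheory.measure_union_le _ _) ?_
    gcongr
  have h2 : M.P (M.AqSet u d₁ d₂ d₃ (i + d₃ + 1) i ∩ M.AqSet u d₁ d₂ d₃ m j) ≤
      M.P (M.Aev u d₁ d₂ d₃ i ∩ M.Aev u d₁ d₂ d₃ j) +
        4 * ENNReal.ofReal (1 - ε) ^ m := by
    refine le_trans (MeasureTheory.measure_mono hsub2) ?_
    refine le_trans (MeasureTheory.measure_union_le _ _) ?_
    gcongr
  have habs1 := toReal_abs_sub_le h1 h2 (htop m)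
  rw [htoReal m] at habs1
  have hprod := M.P_Aq_inter hlf hne (u := u) h13 h23 i m j hj
  have hAqI : (M.P (M.AqSet u d₁ d₂ d₃ (i + d₃ + 1) i)).toReal = a i := by
    rw [← M.P_Aev_eq_Aq h13 h23 i]
  have hAqJ : |(M.P (M.AqSet u d₁ d₂ d₃ m j)).toReal - a j| ≤ 4 * (1 - ε) ^ m := by
    rw [abs_sub_comm]
    exact key1 m j
  calc |(M.P (M.Aev u d₁ d₂ d₃ i ∩ M.Aev u d₁ d₂ d₃ j)).toReal - a i * a j|
      ≤ |(M.P (M.Aev u d₁ d₂ d₃ i ∩ M.Aev u d₁ d₂ d₃ j)).toReal -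
          (M.P (M.AqSet u d₁ d₂ d₃ (i + d₃ + 1) i ∩ M.AqSet u d₁ d₂ d₃ m j)).toReal| +
        |(M.P (M.AqSet u d₁ d₂ d₃ (i + d₃ + 1) i ∩ M.AqSet u d₁ d₂ d₃ m j)).toReal -
          a i * a j| := abs_sub_le _ _ _
    _ ≤ 4 * (1 - ε) ^ m + 4 * (1 - ε) ^ m := by
        refine add_le_add habs1 ?_
        rw [hprod, ENNReal.toReal_mul, hAqI]
        have hmulabs : |a i * (M.P (M.AqSet u d₁ d₂ d₃ m j)).toReal - a i * a j| =
            a i * |(M.P (M.AqSet u d₁ d₂ d₃ m j)).toReal - a j| := by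
          rw [← mul_sub, abs_mul, abs_of_nonneg (ha0 i)]
        rw [hmulabs]
        calc a i * |(M.P (M.AqSet u d₁ d₂ d₃ m j)).toReal - a j|
            ≤ 1 * (4 * (1 - ε) ^ m) :=
              mul_le_mul (ha1 i) hAqJ (abs_nonneg _) zero_le_one
          _ = 4 * (1 - ε) ^ m := one_mul _
    _ = 8 * (1 - ε) ^ m := by ring

end NVM


namespace NVM

variable {V : Type} {G : SimpleGraph V} {ε : ℝ}

set_option maxHeartbeats 2000000 in
lemma markov_bound [Nonempty V] [Countable V]
    (M : NVM G ε) (hε : ε ∈ Set.Ioo (0 : ℝ) 1)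
    (u : V) (d₁ d₂ d₃ : ℕ) (h13 : d₁ ≤ d₃) (h23 : d₂ ≤ d₃)
    (q : ℝ) (hq0 : 0 ≤ q) (hq1 : q ≤ 1)
    (hqa : ∀ i, |(M.P (M.Aev u d₁ d₂ d₃ i)).toReal - q| ≤ 8 * (1 - ε) ^ i)
    (hcov : ∀ i m j, j = i + d₃ + 1 + m →
      |(M.P (M.Aev u d₁ d₂ d₃ i ∩ M.Aev u d₁ d₂ d₃ j)).toReal -
        (M.P (M.Aev u d₁ d₂ d₃ i)).toReal * (M.P (M.Aev u d₁ d₂ d₃ j)).toReal| ≤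
          8 * (1 - ε) ^ m) :
    ∃ C : ℝ, 0 ≤ C ∧ ∀ δ : ℝ, 0 < δ → ∀ t : ℕ, d₃ + 1 ≤ t →
      (M.P {ω | δ ≤ |Sstat3 d₁ d₂ d₃ t (fun i => M.obs u i ω) - q|}).toReal ≤
        C / ((t - d₃ : ℕ) : ℝ) / δ ^ 2 := by
  haveI := M.isProb
  obtain ⟨hε0, hε1⟩ := hε
  have hβ0 : (0:ℝ) ≤ 1 - ε := by linarith
  have hβp : (0:ℝ) < 1 - ε := by linarith
  have hβ1 : (1:ℝ) - ε < 1 := by linarith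
  have hinv0 : (0:ℝ) < (1 - (1 - ε))⁻¹ := by
    rw [show (1 - (1 - ε)) = ε by ring]
    exact inv_pos.2 hε0
  set A : ℕ → Set M.space := fun i => M.Aev u d₁ d₂ d₃ i with hA
  have hAmeas : ∀ i, MeasurableSet (A i) := fun i => M.meas_Aev u d₁ d₂ d₃ i
  set a : ℕ → ℝ := fun i => (M.P (A i)).toReal with ha
  have ha0 : ∀ i, 0 ≤ a i := fun i => ENNReal.toReal_nonneg
  have ha1 : ∀ i, a i ≤ 1 := fun i => prob_toReal_le_one _
  set e : ℕ → ℕ → ℝ :=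
    fun i j => (M.P (A i ∩ A j)).toReal - q * a i - q * a j + q ^ 2 with he
  set C3 : ℝ := 10 / (1 - ε) ^ (d₃ + 1) with hC3
  have hC3pos : 0 < C3 := by rw [hC3]; positivity
  have heub : ∀ i j, i ≤ j → |e i j| ≤ C3 * (1 - ε) ^ (j - i) + 8 * (1 - ε) ^ i := by
    intro i j hij
    have hid : e i j = ((M.P (A i ∩ A j)).toReal - a i * a j) + (a i - q) * (a j - q) := by
      rw [he]; ring
    have h2 : |(a i - q) * (a j - q)| ≤ 8 * (1 - ε) ^ i := by
      rw [abs_mul]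
      have hj1 : |a j - q| ≤ 1 := by
        rw [abs_le]
        constructor <;> nlinarith [ha0 j, ha1 j]
      calc |a i - q| * |a j - q| ≤ (8 * (1 - ε) ^ i) * 1 :=
            mul_le_mul (hqa i) hj1 (abs_nonneg _) (by positivity)
        _ = 8 * (1 - ε) ^ i := mul_one _
    have habs : |e i j| ≤ |(M.P (A i ∩ A j)).toReal - a i * a j| +
        |(a i - q) * (a j - q)| := by
      rw [hid]; exact abs_add_le _ _
    rcases le_or_gt (j - i) (d₃ + 1) with hnear | hfar
    · have ht1 : |(M.P (A i ∩ A j)).toReal - a i * a j| ≤ 1 := by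
        have h00 : (0:ℝ) ≤ (M.P (A i ∩ A j)).toReal := ENNReal.toReal_nonneg
        have h11 : (M.P (A i ∩ A j)).toReal ≤ 1 := prob_toReal_le_one _
        rw [abs_le]
        constructor <;> nlinarith [ha0 i, ha1 i, ha0 j, ha1 j]
      have hC3b : 1 ≤ C3 * (1 - ε) ^ (j - i) := by
        rw [hC3, div_mul_eq_mul_div, le_div_iff₀ (by positivity)]
        have hp := pow_le_pow_of_le_one hβ0 (le_of_lt hβ1) hnear
        nlinarith [pow_nonneg hβ0 (j - i)]
      linarith
    · obtain ⟨m, hm⟩ : ∃ m, j = i + d₃ + 1 + m := ⟨j - i - d₃ - 1, by omega⟩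
      have h5 := hcov i m j hm
      have hkey : C3 * (1 - ε) ^ (j - i) = 10 * (1 - ε) ^ m := by
        have hsplit : (1 - ε) ^ (j - i) = (1 - ε) ^ m * (1 - ε) ^ (d₃ + 1) := by
          rw [← pow_add]
          congr 1
          omega
        rw [hC3, hsplit]
        field_simp
      have hbig : 8 * (1 - ε) ^ m ≤ C3 * (1 - ε) ^ (j - i) := by
        rw [hkey]
        nlinarith [pow_nonneg hβ0 m]
      have h5' : |(M.P (A i ∩ A j)).toReal - a i * a j| ≤ 8 * (1 - ε) ^ m := h5
      linarith
  have hesym : ∀ i j, e i j = e j i := by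
    intro i j
    rw [he]
    simp only
    rw [Set.inter_comm]
    ring
  have heub2 : ∀ i j, |e i j| ≤ C3 * ((1 - ε) ^ (i - j) * (1 - ε) ^ (j - i)) +
      (8 * (1 - ε) ^ i + 8 * (1 - ε) ^ j) := by
    intro i j
    rcases le_total i j with h | h
    · have hb := heub i j h
      rw [show i - j = 0 by omega, pow_zero, one_mul]
      nlinarith [pow_nonneg hβ0 j]
    · have hb := heub j i h
      rw [hesym i j, show j - i = 0 by omega, pow_zero, mul_one]
      nlinarith [pow_nonneg hβ0 i]
  set Cg : ℝ := (1 - (1 - ε))⁻¹ with hCg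
  have hCg0 : 0 ≤ Cg := le_of_lt hinv0
  set Ctot : ℝ := 2 * C3 * Cg + 16 * Cg with hCtot
  have hCtot0 : 0 ≤ Ctot := by
    rw [hCtot]
    nlinarith [mul_nonneg (mul_nonneg (by norm_num : (0:ℝ) ≤ 2) hC3pos.le) hCg0,
      mul_nonneg (by norm_num : (0:ℝ) ≤ 16) hCg0]
  have hsument : ∀ n : ℕ,
      ∑ i ∈ Finset.Icc 1 n, ∑ j ∈ Finset.Icc 1 n, |e i j| ≤ n * Ctot := by
    intro n
    have hgeoI : ∑ i ∈ Finset.Icc 1 n, (1 - ε) ^ i ≤ Cg := by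
      rw [hCg]
      refine le_trans (Finset.sum_le_sum_of_subset_of_nonneg ?_
        (fun k _ _ => pow_nonneg hβ0 k)) (geom_sum_le_inv hβ0 hβ1 (n + 1))
      intro k hk
      rw [Finset.mem_Icc] at hk
      rw [Finset.mem_range]
      omega
    have hcard : (Finset.Icc 1 n).card = n := by rw [Nat.card_Icc]; omega
    calc ∑ i ∈ Finset.Icc 1 n, ∑ j ∈ Finset.Icc 1 n, |e i j|
        ≤ ∑ i ∈ Finset.Icc 1 n, ∑ j ∈ Finset.Icc 1 n,
            (C3 * ((1 - ε) ^ (i - j) * (1 - ε) ^ (j - i)) +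
              (8 * (1 - ε) ^ i + 8 * (1 - ε) ^ j)) :=
          Finset.sum_le_sum fun i _ => Finset.sum_le_sum fun j _ => heub2 i j
      _ = (∑ i ∈ Finset.Icc 1 n, ∑ j ∈ Finset.Icc 1 n,
            C3 * ((1 - ε) ^ (i - j) * (1 - ε) ^ (j - i))) +
          ((∑ i ∈ Finset.Icc 1 n, ∑ j ∈ Finset.Icc 1 n, 8 * (1 - ε) ^ i) +
           (∑ i ∈ Finset.Icc 1 n, ∑ j ∈ Finset.Icc 1 n, 8 * (1 - ε) ^ j)) := by
          simp only [Finset.sum_add_distrib]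
      _ ≤ (n : ℝ) * (2 * C3 * Cg) + ((n : ℝ) * (8 * Cg) + (n : ℝ) * (8 * Cg)) := by
          refine add_le_add ?_ (add_le_add ?_ ?_)
          · calc ∑ i ∈ Finset.Icc 1 n, ∑ j ∈ Finset.Icc 1 n,
                  C3 * ((1 - ε) ^ (i - j) * (1 - ε) ^ (j - i))
                = ∑ i ∈ Finset.Icc 1 n, C3 * ∑ j ∈ Finset.Icc 1 n,
                    ((1 - ε) ^ (i - j) * (1 - ε) ^ (j - i)) := by
                  refine Finset.sum_congr rfl fun i _ => ?_
                  rw [Finset.mul_sum]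
              _ ≤ ∑ i ∈ Finset.Icc 1 n, C3 * (2 * Cg) := by
                  refine Finset.sum_le_sum fun i _ => ?_
                  refine mul_le_mul_of_nonneg_left ?_ hC3pos.le
                  rw [hCg]
                  exact sum_geom_two hβ0 hβ1 i n
              _ = (n : ℝ) * (2 * C3 * Cg) := by
                  rw [Finset.sum_const, hcard, nsmul_eq_mul]
                  ring
          · calc ∑ i ∈ Finset.Icc 1 n, ∑ j ∈ Finset.Icc 1 n, 8 * (1 - ε) ^ i
                = ∑ i ∈ Finset.Icc 1 n, (n : ℝ) * (8 * (1 - ε) ^ i) := by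
                  refine Finset.sum_congr rfl fun i _ => ?_
                  rw [Finset.sum_const, hcard, nsmul_eq_mul]
              _ = (n : ℝ) * (8 * ∑ i ∈ Finset.Icc 1 n, (1 - ε) ^ i) := by
                  rw [← Finset.mul_sum]
                  congr 1
                  rw [← Finset.mul_sum]
              _ ≤ (n : ℝ) * (8 * Cg) := by
                  refine mul_le_mul_of_nonneg_left ?_ (Nat.cast_nonneg n)
                  exact mul_le_mul_of_nonneg_left hgeoI (by norm_num)
          · calc ∑ i ∈ Finset.Icc 1 n, ∑ j ∈ Finset.Icc 1 n, 8 * (1 - ε) ^ j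
                = ∑ _i ∈ Finset.Icc 1 n, (8 * ∑ j ∈ Finset.Icc 1 n, (1 - ε) ^ j) := by
                  refine Finset.sum_congr rfl fun i _ => ?_
                  rw [← Finset.mul_sum]
              _ ≤ ∑ _i ∈ Finset.Icc 1 n, 8 * Cg :=
                  Finset.sum_le_sum fun i _ =>
                    mul_le_mul_of_nonneg_left hgeoI (by norm_num)
              _ = (n : ℝ) * (8 * Cg) := by
                  rw [Finset.sum_const, hcard, nsmul_eq_mul]
      _ = (n : ℝ) * Ctot := by rw [hCtot]; ring
  set ζ : ℕ → M.space → ℝ := fun i => (A i).indicator (fun _ => (1:ℝ)) with hζ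
  have hmul : ∀ i j (ω : M.space),
      ζ i ω * ζ j ω = ((A i ∩ A j).indicator (fun _ => (1:ℝ))) ω := by
    intro i j ω
    have h := Set.inter_indicator_mul (s := A i) (t := A j)
      (f := fun _ => (1:ℝ)) (g := fun _ => (1:ℝ)) ω
    simp only [one_mul] at h
    exact h.symm
  have hpoint : ∀ i j (ω : M.space), (ζ i ω - q) * (ζ j ω - q) =
      (A i ∩ A j).indicator (fun _ => (1:ℝ)) ω - q * ζ i ω - q * ζ j ω + q ^ 2 := by
    intro i j ω
    rw [← hmul i j ω]
    ring
  have hint : ∀ (s : Set M.space), MeasurableSet s →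
      MeasureTheory.Integrable (s.indicator (fun _ => (1:ℝ))) M.P :=
    fun s hs => (MeasureTheory.integrable_const 1).indicator hs
  have hIζ : ∀ i, MeasureTheory.Integrable (ζ i) M.P := fun i => hint _ (hAmeas i)
  have hintij : ∀ i j,
      MeasureTheory.Integrable (fun ω => (ζ i ω - q) * (ζ j ω - q)) M.P := by
    intro i j
    have hrw : (fun ω => (ζ i ω - q) * (ζ j ω - q)) = fun ω =>
        (A i ∩ A j).indicator (fun _ => (1:ℝ)) ω - q * ζ i ω - q * ζ j ω + q ^ 2 :=
      funext (hpoint i j)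
    rw [hrw]
    exact (((hint _ ((hAmeas i).inter (hAmeas j))).sub ((hIζ i).const_mul q)).sub
      ((hIζ j).const_mul q)).add (MeasureTheory.integrable_const _)
  have hiζ : ∀ i, ∫ ω, ζ i ω ∂M.P = a i := by
    intro i
    simp only [hζ]
    rw [MeasureTheory.integral_indicator_const (1:ℝ) (hAmeas i), smul_eq_mul, mul_one]
    rfl
  have hEij : ∀ i j, ∫ ω, (ζ i ω - q) * (ζ j ω - q) ∂M.P = e i j := by
    intro i j
    have hrw : (fun ω => (ζ i ω - q) * (ζ j ω - q)) = fun ω =>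
        (A i ∩ A j).indicator (fun _ => (1:ℝ)) ω - q * ζ i ω - q * ζ j ω + q ^ 2 :=
      funext (hpoint i j)
    rw [hrw]
    have i1 := hint _ ((hAmeas i).inter (hAmeas j))
    have i2 := (hIζ i).const_mul q
    have i3 := (hIζ j).const_mul q
    calc ∫ ω, ((A i ∩ A j).indicator (fun _ => (1:ℝ)) ω - q * ζ i ω - q * ζ j ω + q ^ 2) ∂M.P
        = (∫ ω, ((A i ∩ A j).indicator (fun _ => (1:ℝ)) ω - q * ζ i ω - q * ζ j ω) ∂M.P) +
            ∫ _ω, q ^ 2 ∂M.P :=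
          MeasureTheory.integral_add ((i1.sub i2).sub i3) (MeasureTheory.integrable_const _)
      _ = ((∫ ω, ((A i ∩ A j).indicator (fun _ => (1:ℝ)) ω - q * ζ i ω) ∂M.P) -
            ∫ ω, q * ζ j ω ∂M.P) + ∫ _ω, q ^ 2 ∂M.P :=
          congrArg (fun x => x + ∫ _ω, q ^ 2 ∂M.P) (MeasureTheory.integral_sub (i1.sub i2) i3)
      _ = (((∫ ω, (A i ∩ A j).indicator (fun _ => (1:ℝ)) ω ∂M.P) - ∫ ω, q * ζ i ω ∂M.P) -
            ∫ ω, q * ζ j ω ∂M.P) + ∫ _ω, q ^ 2 ∂M.P :=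
          congrArg (fun x => (x - ∫ ω, q * ζ j ω ∂M.P) + ∫ _ω, q ^ 2 ∂M.P)
            (MeasureTheory.integral_sub i1 i2)
      _ = e i j := by
          rw [MeasureTheory.integral_indicator_const (1:ℝ) ((hAmeas i).inter (hAmeas j)),
            MeasureTheory.integral_const_mul, MeasureTheory.integral_const_mul, hiζ i, hiζ j,
            MeasureTheory.integral_const]
          simp only [MeasureTheory.measure_univ, ENNReal.toReal_one, MeasureTheory.measureReal_def, smul_eq_mul, mul_one,
            one_mul, he]
  refine ⟨Ctot, hCtot0, ?_⟩
  intro δ hδ t ht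
  set n : ℕ := t - d₃ with hn
  have hn1 : 1 ≤ n := by omega
  have hnR : (0:ℝ) < (n:ℝ) := by exact_mod_cast Nat.pos_of_ne_zero (by omega)
  set F : M.space → ℝ := fun ω => Sstat3 d₁ d₂ d₃ t (fun i => M.obs u i ω) with hF
  have hFrep : ∀ ω, F ω = (1/((n:ℕ):ℝ)) * ∑ i ∈ Finset.Icc 1 n, ζ i ω := by
    intro ω
    simp only [hF]
    rw [M.Sstat3_rep u h13 h23 t (by omega) ω]
  have hFsub : ∀ ω, F ω - q = (1/((n:ℕ):ℝ)) * ∑ i ∈ Finset.Icc 1 n, (ζ i ω - q) := by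
    intro ω
    rw [hFrep ω, Finset.sum_sub_distrib, Finset.sum_const, Nat.card_Icc,
      show n + 1 - 1 = n by omega, nsmul_eq_mul, mul_sub]
    have hqq : (1/((n:ℕ):ℝ)) * ((n:ℝ) * q) = q := by
      field_simp
    rw [hqq]
  have hsq : ∀ ω, (F ω - q)^2 = (1/((n:ℕ):ℝ))^2 *
      ∑ i ∈ Finset.Icc 1 n, ∑ j ∈ Finset.Icc 1 n, (ζ i ω - q) * (ζ j ω - q) := by
    intro ω
    rw [hFsub ω, mul_pow, ← Finset.sum_mul_sum]
    ring
  have hIsum : MeasureTheory.Integrable (fun ω =>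
      ∑ i ∈ Finset.Icc 1 n, ∑ j ∈ Finset.Icc 1 n, (ζ i ω - q) * (ζ j ω - q)) M.P :=
    MeasureTheory.integrable_finset_sum _ (fun i _ =>
      MeasureTheory.integrable_finset_sum _ (fun j _ => hintij i j))
  have hIF2 : MeasureTheory.Integrable (fun ω => (F ω - q)^2) M.P := by
    have hrw : (fun ω => (F ω - q)^2) = fun ω => (1/((n:ℕ):ℝ))^2 *
        ∑ i ∈ Finset.Icc 1 n, ∑ j ∈ Finset.Icc 1 n, (ζ i ω - q) * (ζ j ω - q) :=
      funext hsq
    rw [hrw]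
    exact hIsum.const_mul _
  have hI2 : ∫ ω, (F ω - q)^2 ∂M.P ≤ Ctot / (n:ℝ) := by
    have h1 : ∫ ω, (F ω - q)^2 ∂M.P = (1/((n:ℕ):ℝ))^2 *
        ∑ i ∈ Finset.Icc 1 n, ∑ j ∈ Finset.Icc 1 n, e i j := by
      calc ∫ ω, (F ω - q)^2 ∂M.P
          = ∫ ω, (1/((n:ℕ):ℝ))^2 * ∑ i ∈ Finset.Icc 1 n, ∑ j ∈ Finset.Icc 1 n,
              (ζ i ω - q) * (ζ j ω - q) ∂M.P :=
            MeasureTheory.integral_congr_ae (Filter.Eventually.of_forall hsq)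
        _ = (1/((n:ℕ):ℝ))^2 * ∫ ω, ∑ i ∈ Finset.Icc 1 n, ∑ j ∈ Finset.Icc 1 n,
              (ζ i ω - q) * (ζ j ω - q) ∂M.P := MeasureTheory.integral_const_mul _ _
        _ = (1/((n:ℕ):ℝ))^2 * ∑ i ∈ Finset.Icc 1 n, ∑ j ∈ Finset.Icc 1 n, e i j := by
            rw [MeasureTheory.integral_finset_sum _ (fun i _ =>
              MeasureTheory.integrable_finset_sum _ (fun j _ => hintij i j))]
            congr 1
            refine Finset.sum_congr rfl fun i _ => ?_
            rw [MeasureTheory.integral_finset_sum _ (fun j _ => hintij i j)]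
            exact Finset.sum_congr rfl fun j _ => hEij i j
    have h2 : ∑ i ∈ Finset.Icc 1 n, ∑ j ∈ Finset.Icc 1 n, e i j ≤ (n : ℝ) * Ctot :=
      le_trans (Finset.sum_le_sum fun i _ => Finset.sum_le_sum fun j _ =>
        le_abs_self _) (hsument n)
    rw [h1]
    calc (1/((n:ℕ):ℝ))^2 * ∑ i ∈ Finset.Icc 1 n, ∑ j ∈ Finset.Icc 1 n, e i j
        ≤ (1/((n:ℕ):ℝ))^2 * ((n : ℝ) * Ctot) := by
          exact mul_le_mul_of_nonneg_left h2 (by positivity)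
      _ = Ctot / (n:ℝ) := by
          field_simp
  set E : Set M.space := {ω | δ ≤ |F ω - q|} with hE
  have hFmeas : Measurable F := M.meas_Fstat u h13 h23 t (by omega)
  have hEmeas : MeasurableSet E :=
    measurableSet_le measurable_const (hFmeas.sub measurable_const).abs
  have hind : ∀ ω, E.indicator (fun _ => δ^2) ω ≤ (F ω - q)^2 := by
    intro ω
    rw [Set.indicator_apply]
    split_ifs with hmem
    · have hmem' : δ ≤ |F ω - q| := hmem
      calc δ^2 ≤ |F ω - q|^2 := by nlinarith [abs_nonneg (F ω - q)]
        _ = (F ω - q)^2 := sq_abs _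
    · positivity
  have hmark : (M.P E).toReal * δ^2 ≤ ∫ ω, (F ω - q)^2 ∂M.P := by
    have h1 : ∫ ω, E.indicator (fun _ => δ^2) ω ∂M.P = (M.P E).toReal * δ^2 := by
      rw [MeasureTheory.integral_indicator_const _ hEmeas, smul_eq_mul]
      rfl
    rw [← h1]
    exact MeasureTheory.integral_mono
      ((MeasureTheory.integrable_const _).indicator hEmeas) hIF2 hind
  rw [le_div_iff₀ (by positivity)]
  exact le_trans hmark hI2

end NVM


namespace NVM

variable {V : Type} {G : SimpleGraph V} {ε : ℝ}

lemma master [Nonempty V] [Countable V]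
    (M : NVM G ε) (hε : ε ∈ Set.Ioo (0 : ℝ) 1)
    (hlf : ∀ v, (G.neighborSet v).Finite) (hne : ∀ v, (G.neighborSet v).Nonempty)
    (u : V) (d₁ d₂ d₃ : ℕ) (h13 : d₁ ≤ d₃) (h23 : d₂ ≤ d₃) :
    ∃ q : ℝ, qlim M u d₁ d₂ d₃ = q ∧
      ∀ δ : ℝ, 0 < δ →
        Filter.Tendsto
          (fun t => M.P {ω | Sstat3 d₁ d₂ d₃ t (fun i => M.obs u i ω) ∈ Metric.ball q δ})
          Filter.atTop (𝓝 1) := by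
  haveI := M.isProb
  obtain ⟨q, hqlim, hq0, hq1, hqa, hcov⟩ := qlim_props M hε hlf hne u d₁ d₂ d₃ h13 h23
  obtain ⟨C, hC0, hC⟩ := markov_bound M hε u d₁ d₂ d₃ h13 h23 q hq0 hq1 hqa hcov
  refine ⟨q, hqlim, ?_⟩
  intro δ hδ
  have hset : ∀ t, d₃ + 1 ≤ t →
      {ω | Sstat3 d₁ d₂ d₃ t (fun i => M.obs u i ω) ∈ Metric.ball q δ} =
        {ω | δ ≤ |Sstat3 d₁ d₂ d₃ t (fun i => M.obs u i ω) - q|}ᶜ := by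
    intro t _
    ext ω
    simp [Metric.mem_ball, Real.dist_eq, not_le]
  have hmeasE : ∀ t, d₃ + 1 ≤ t → MeasurableSet
      {ω | δ ≤ |Sstat3 d₁ d₂ d₃ t (fun i => M.obs u i ω) - q|} := by
    intro t ht
    exact measurableSet_le measurable_const
      (((M.meas_Fstat u h13 h23 t (by omega)).sub measurable_const).abs)
  have hPE : Filter.Tendsto (fun t => M.P {ω | δ ≤ |Sstat3 d₁ d₂ d₃ t
      (fun i => M.obs u i ω) - q|}) Filter.atTop (𝓝 0) := by
    have hub : ∀ᶠ t in Filter.atTop,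
        M.P {ω | δ ≤ |Sstat3 d₁ d₂ d₃ t (fun i => M.obs u i ω) - q|} ≤
          ENNReal.ofReal (C / ((t - d₃ : ℕ) : ℝ) / δ ^ 2) := by
      refine Filter.eventually_atTop.2 ⟨d₃ + 1, fun t ht => ?_⟩
      have h := hC δ hδ t ht
      calc M.P {ω | δ ≤ |Sstat3 d₁ d₂ d₃ t (fun i => M.obs u i ω) - q|}
          = ENNReal.ofReal ((M.P {ω | δ ≤ |Sstat3 d₁ d₂ d₃ t
              (fun i => M.obs u i ω) - q|}).toReal) :=
            (ENNReal.ofReal_toReal (MeasureTheory.measure_ne_top _ _)).symm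
        _ ≤ ENNReal.ofReal (C / ((t - d₃ : ℕ) : ℝ) / δ ^ 2) := ENNReal.ofReal_le_ofReal h
    have hto0 : Filter.Tendsto (fun t : ℕ => ENNReal.ofReal (C / ((t - d₃ : ℕ) : ℝ) / δ ^ 2))
        Filter.atTop (𝓝 0) := by
      have hr : Filter.Tendsto (fun t : ℕ => C / ((t - d₃ : ℕ) : ℝ) / δ ^ 2)
          Filter.atTop (𝓝 0) := by
        have h1 : Filter.Tendsto (fun t : ℕ => ((t - d₃ : ℕ) : ℝ)) Filter.atTop Filter.atTop :=
          tendsto_natCast_atTop_atTop.comp (tendsto_sub_atTop_nat d₃)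
        have h2 := Filter.Tendsto.div_atTop (tendsto_const_nhds (x := C)) h1
        simpa using h2.div_const (δ ^ 2)
      have := ENNReal.tendsto_ofReal hr
      simpa using this
    exact tendsto_of_tendsto_of_tendsto_of_le_of_le' tendsto_const_nhds hto0
      (Filter.Eventually.of_forall fun t => zero_le) hub
  have hfinal := ENNReal.Tendsto.sub (tendsto_const_nhds (x := (1 : ℝ≥0∞))) hPE
    (Or.inl ENNReal.one_ne_top)
  simp only [tsub_zero] at hfinal
  refine Filter.Tendsto.congr' ?_ hfinal
  refine Filter.eventually_atTop.2 ⟨d₃ + 1, fun t ht => ?_⟩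
  beta_reduce
  rw [hset t ht, MeasureTheory.prob_compl_eq_one_sub (hmeasE t ht)]

end NVM


/-- Theorem 2.11: if `q_{d₁,d₂,d₃}(G₁,u₁) ≠ q_{d₁,d₂,d₃}(G₂,u₂)` for some
positive integers `d₁ < d₂ < d₃`, then `(G₁,u₁)` and `(G₂,u₂)` are distinguishable by
`S^{(d₁,d₂,d₃)}`. -/
theorem distinguishable_of_qlim_ne
    {V₁ V₂ : Type} {G₁ : SimpleGraph V₁} {G₂ : SimpleGraph V₂} {ε : ℝ}
    (hε : ε ∈ Set.Ioo (0 : ℝ) 1)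
    (hG₁ : G₁.Connected) (hlf₁ : ∀ v, (G₁.neighborSet v).Finite)
    (hG₂ : G₂.Connected) (hlf₂ : ∀ v, (G₂.neighborSet v).Finite)
    (M₁ : NVM G₁ ε) (M₂ : NVM G₂ ε) (u₁ : V₁) (u₂ : V₂)
    (d₁ d₂ d₃ : ℕ) (hd₁ : 0 < d₁) (h₁₂ : d₁ < d₂) (h₂₃ : d₂ < d₃)
    (hne : qlim M₁ u₁ d₁ d₂ d₃ ≠ qlim M₂ u₂ d₁ d₂ d₃) :
    DistinguishableBy M₁ u₁ M₂ u₂ (Sstat3 d₁ d₂ d₃) := by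
  haveI : Countable V₁ := countable_of_connected hG₁ hlf₁
  haveI : Countable V₂ := countable_of_connected hG₂ hlf₂
  haveI : Nonempty V₁ := ⟨u₁⟩
  haveI : Nonempty V₂ := ⟨u₂⟩
  haveI := M₁.isProb
  haveI := M₂.isProb
  have hne₁ : ∀ v, (G₁.neighborSet v).Nonempty := fun v => nonempty_nbr hG₁ M₁ v
  have hne₂ : ∀ v, (G₂.neighborSet v).Nonempty := fun v => nonempty_nbr hG₂ M₂ v
  obtain ⟨q₁, hq₁, h₁⟩ := NVM.master M₁ hε hlf₁ hne₁ u₁ d₁ d₂ d₃ (by omega) (by omega)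
  obtain ⟨q₂, hq₂, h₂⟩ := NVM.master M₂ hε hlf₂ hne₂ u₂ d₁ d₂ d₃ (by omega) (by omega)
  have hqq : q₁ ≠ q₂ := by
    rw [hq₁, hq₂] at hne
    exact hne
  set δ : ℝ := |q₁ - q₂| / 3 with hδdef
  have habs : 0 < |q₁ - q₂| := abs_pos.2 (sub_ne_zero.2 hqq)
  have hδ : 0 < δ := by rw [hδdef]; linarith
  refine ⟨fun _ => Metric.ball q₁ δ, fun _ => Metric.ball q₂ δ, fun t => ?_, ?_⟩
  · apply Metric.ball_disjoint_ball
    rw [Real.dist_eq, hδdef]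
    linarith
  · have hsets : ∀ t : ℕ,
        {ω : M₁.space × M₂.space |
          Sstat3 d₁ d₂ d₃ t (fun i => M₁.obs u₁ i ω.1) ∈ Metric.ball q₁ δ ∧
          Sstat3 d₁ d₂ d₃ t (fun i => M₂.obs u₂ i ω.2) ∈ Metric.ball q₂ δ} =
        ({ω : M₁.space | Sstat3 d₁ d₂ d₃ t (fun i => M₁.obs u₁ i ω) ∈ Metric.ball q₁ δ} ×ˢ
         {ω : M₂.space | Sstat3 d₁ d₂ d₃ t (fun i => M₂.obs u₂ i ω) ∈ Metric.ball q₂ δ}) :=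
      fun t => rfl
    have hprod : ∀ t : ℕ, (M₁.P.prod M₂.P)
        {ω : M₁.space × M₂.space |
          Sstat3 d₁ d₂ d₃ t (fun i => M₁.obs u₁ i ω.1) ∈ Metric.ball q₁ δ ∧
          Sstat3 d₁ d₂ d₃ t (fun i => M₂.obs u₂ i ω.2) ∈ Metric.ball q₂ δ} =
        M₁.P {ω : M₁.space | Sstat3 d₁ d₂ d₃ t (fun i => M₁.obs u₁ i ω) ∈ Metric.ball q₁ δ} *
        M₂.P {ω : M₂.space | Sstat3 d₁ d₂ d₃ t (fun i => M₂.obs u₂ i ω) ∈ Metric.ball q₂ δ} := by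
      intro t
      rw [hsets t]
      exact MeasureTheory.Measure.prod_prod _ _
    have hmul := ENNReal.Tendsto.mul (h₁ δ hδ) (Or.inr ENNReal.one_ne_top) (h₂ δ hδ)
      (Or.inr ENNReal.one_ne_top)
    rw [mul_one] at hmul
    exact Filter.Tendsto.congr (fun t => (hprod t).symm) hmul

end NVMPaper
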